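/- arXiv:2508.21819 — 10 statements merged into one kernel-verified Lean document; each statement's English description precedes it below -/
import Mathlib

section
/- Every left-cancellative pair (𝓐, 𝓑) over a ground set of size n satisfies |𝓐| · |𝓑| ≤ 3^n. -/
/-- `(𝓐, 𝓑)` is a left-cancellative pair over the ground set `X`. -/
def IsLeftCancellativePair (X : Finset ℕ) (𝓐 𝓑 : Finset (Finset ℕ)) : Prop :=
  (∀ A ∈ 𝓐, A ⊆ X) ∧ (∀ B ∈ 𝓑, B ⊆ X) ∧
  (∀ A ∈ 𝓐, ∀ A' ∈ 𝓐, ∀ B ∈ 𝓑, A \ B = A' \ B → A = A')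

theorem stmt_3 (n : ℕ) (X : Finset ℕ) (hX : X.card = n)
    (𝓐 𝓑 : Finset (Finset ℕ)) (h : IsLeftCancellativePair X 𝓐 𝓑) :
    𝓐.card * 𝓑.card ≤ 3 ^ n := by
  obtain ⟨hA, hB, hcanc⟩ := h
  classical
  set g : Finset ℕ × Finset ℕ → (↥X → Fin 3) := fun p x =>
    if x.1 ∈ p.2 then 1 else if x.1 ∈ p.1 then 0 else 2 with hg
  have key : Set.InjOn g (𝓐 ×ˢ 𝓑 : Finset (Finset ℕ × Finset ℕ)) := by
    rintro ⟨A, B⟩ hp ⟨A', B'⟩ hp' heq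
    simp only [Finset.coe_mem, Finset.mem_coe, Finset.mem_product] at hp hp'
    have hBB : B = B' := by
      ext x
      constructor
      · intro hx
        have hxX : x ∈ X := hB B hp.2 hx
        have := congrFun heq ⟨x, hxX⟩
        simp only [hg, hx, if_pos] at this
        by_contra hx'
        simp only [hx'] at this
        split_ifs at this <;> simp_all
      · intro hx
        have hxX : x ∈ X := hB B' hp'.2 hx
        have := congrFun heq ⟨x, hxX⟩
        simp only [hg, hx, if_pos] at this
        by_contra hx'
        simp only [hx'] at this
        split_ifs at this <;> simp_all
    subst hBB
    have hAA : A \ B = A' \ B := by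
      ext x
      simp only [Finset.mem_sdiff]
      constructor
      · rintro ⟨hx, hxB⟩
        have hxX : x ∈ X := hA A hp.1 hx
        have := congrFun heq ⟨x, hxX⟩
        simp only [hg, hxB, if_neg, hx, if_pos, not_false_iff] at this
        refine ⟨?_, hxB⟩
        by_contra hx'
        simp [hx'] at this
      · rintro ⟨hx, hxB⟩
        have hxX : x ∈ X := hA A' hp'.1 hx
        have := congrFun heq ⟨x, hxX⟩
        simp only [hg, hxB, if_neg, hx, if_pos, not_false_iff] at this
        refine ⟨?_, hxB⟩
        by_contra hx'
        simp [hx'] at this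
    have := hcanc A hp.1 A' hp'.1 B hp.2 hAA
    simp [this]
  have hle : (𝓐 ×ˢ 𝓑).card ≤ (Finset.univ : Finset (↥X → Fin 3)).card := by
    apply Finset.card_le_card_of_injOn g (fun _ _ => Finset.mem_univ _) key
  rwa [Finset.card_product, Finset.card_univ, Fintype.card_fun, Fintype.card_coe,
    Fintype.card_fin, hX] at hle
end

section
/- For every ε > 0 there exists N such that for all n ≥ N there is a left-cancellative pair (𝓐, 𝓑) over a ground set of size n with |𝓐| · |𝓑| ≥ 3^((1−ε)·n). -/
open Finset Matrix Filter Asymptotics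

theorem AddMonoidHom.card_eq_card_ker_mul_card_range {G H : Type*} [AddGroup G] [AddGroup H]
    (f : G →+ H) : Nat.card G = Nat.card f.ker * Nat.card f.range := by
  rw [← f.ker.card_mul_index, AddSubgroup.index_ker]

theorem AddMonoidHom.card_ker_eq_card_filter {G H : Type*} [AddGroup G] [AddGroup H] [Fintype G]
    [DecidableEq H] (f : G →+ H) : Nat.card f.ker = #{x | f x = 0} := by
  rw [← Fintype.card_subtype, ← Nat.card_eq_fintype_card]
  rfl

section MatrixKernel

variable {ι κ : Type*} [Fintype ι] [Fintype κ] [DecidableEq ι] [DecidableEq κ]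

theorem Matrix.card_pow_le_card_mulVec_eq_zero_mul {R : Type*} [CommRing R] [Fintype R]
    [DecidableEq R] (M : Matrix κ ι R) :
    Fintype.card R ^ Fintype.card ι ≤
      #{v | M *ᵥ v = 0} * Fintype.card R ^ Fintype.card κ := by
  let f := (mulVecLin M).toAddMonoidHom
  calc Fintype.card R ^ Fintype.card ι = Nat.card f.ker * Nat.card f.range := by
        rw [← f.card_eq_card_ker_mul_card_range, Nat.card_eq_fintype_card, Fintype.card_fun]
    _ ≤ #{v | M *ᵥ v = 0} * Fintype.card R ^ Fintype.card κ := by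
        rw [f.card_ker_eq_card_filter, ← Fintype.card_fun, ← Nat.card_eq_fintype_card]
        exact Nat.mul_le_mul_left _ (Nat.card_le_card_of_injective _ Subtype.coe_injective)

theorem Matrix.card_mulVec_eq_zero_mul {K : Type*} [Field K] [Fintype K] [DecidableEq K]
    {v : ι → K} (hv : v ≠ 0) :
    #{M : Matrix κ ι K | M *ᵥ v = 0} * Fintype.card K ^ Fintype.card κ =
      Fintype.card K ^ (Fintype.card κ * Fintype.card ι) := by
  obtain ⟨j, hj⟩ := Function.ne_iff.mp hv
  let f := mulVec.addMonoidHomLeft (m := κ) v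
  have hf : Function.Surjective f := fun w ↦ ⟨vecMulVec w (Pi.single j (v j)⁻¹), by
    change vecMulVec w _ *ᵥ v = w
    simp [vecMulVec_mulVec, inv_mul_cancel₀ hj]⟩
  have hrange : Nat.card f.range = Nat.card (κ → K) := by
    rw [f.range_eq_top.mpr hf, AddSubgroup.card_top]
  change #{M | f M = 0} * _ = _
  rw [← f.card_ker_eq_card_filter, ← Fintype.card_fun, ← Nat.card_eq_fintype_card, ← hrange,
    ← f.card_eq_card_ker_mul_card_range]
  simp [Matrix, pow_mul']

end MatrixKernel

theorem Finset.exists_mul_card_filter_le {α β : Type*} [Fintype α] [Nonempty α] (s : Finset β)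
    (P : α → β → Prop) [DecidableRel P] (q : ℕ)
    (h : ∀ b ∈ s, q * #{a | P a b} ≤ Fintype.card α) :
    ∃ a, q * #{b ∈ s | P a b} ≤ #s := by
  have hsum : ∑ a, q * #{b ∈ s | P a b} ≤ ∑ _a : α, #s :=
    calc ∑ a, q * #{b ∈ s | P a b} = ∑ b ∈ s, q * #{a | P a b} := by
          simp only [card_filter, mul_sum]
          exact sum_comm
      _ ≤ ∑ _b ∈ s, Fintype.card α := sum_le_sum h
      _ = ∑ _a : α, #s := by simp [mul_comm]
  obtain ⟨a, -, ha⟩ := exists_le_of_sum_le univ_nonempty hsum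
  exact ⟨a, ha⟩

theorem Nat.exists_three_pow_le_mul_two_pow_mul_choose (n : ℕ) :
    ∃ k ≤ n, 3 ^ n ≤ (n + 1) * (2 ^ (n - k) * n.choose k) := by
  obtain ⟨k, hk, hmax⟩ := exists_max_image (range (n + 1))
    (fun k ↦ 2 ^ (n - k) * n.choose k) nonempty_range_add_one
  refine ⟨k, Nat.lt_succ_iff.mp (mem_range.mp hk), ?_⟩
  calc 3 ^ n = ∑ i ∈ range (n + 1), 2 ^ (n - i) * n.choose i := by
        simpa [add_comm] using add_pow (1 : ℕ) 2 n
    _ ≤ #(range (n + 1)) • (2 ^ (n - k) * n.choose k) := sum_le_card_nsmul _ _ _ hmax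
    _ = (n + 1) * (2 ^ (n - k) * n.choose k) := by simp

section BinaryVectors

variable {m n : ℕ}

def natSupport (v : Fin n → ZMod 2) : Finset ℕ :=
  ({j | v j ≠ 0} : Finset (Fin n)).map Fin.valEmbedding

theorem val_mem_natSupport {v : Fin n → ZMod 2} {j : Fin n} :
    (j : ℕ) ∈ natSupport v ↔ v j ≠ 0 := by
  simp [natSupport, Fin.val_inj]

theorem natSupport_subset_range (v : Fin n → ZMod 2) : natSupport v ⊆ range n := by
  simp [natSupport, subset_iff]

theorem eq_of_val_mem_natSupport_iff {v w : Fin n → ZMod 2} {j : Fin n}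
    (h : (j : ℕ) ∈ natSupport v ↔ (j : ℕ) ∈ natSupport w) : v j = w j := by
  have key : ∀ a b : ZMod 2, (a ≠ 0 ↔ b ≠ 0) → a = b := by decide
  exact key _ _ (by simpa only [val_mem_natSupport] using h)

theorem natSupport_injective : Function.Injective (natSupport (n := n)) :=
  fun _ _ h ↦ funext fun _ ↦ eq_of_val_mem_natSupport_iff (by rw [h])

theorem natSupport_add_subset_of_sdiff_eq {v w : Fin n → ZMod 2} {B : Finset ℕ}
    (h : natSupport v \ B = natSupport w \ B) : natSupport (v + w) ⊆ B := by
  intro x hx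
  obtain ⟨j, -, rfl⟩ := mem_map.mp hx
  rw [Fin.valEmbedding_apply] at hx ⊢
  by_contra hjB
  have hvw : v j = w j := eq_of_val_mem_natSupport_iff <| by
    simpa only [Finset.mem_sdiff, hjB, not_false_eq_true, and_true] using Finset.ext_iff.mp h j
  exact val_mem_natSupport.mp hx (by simp [hvw, CharTwo.add_self_eq_zero])

-- Equivalently, the columns of `M` indexed by `B` are linearly independent.
def KerTrivialOn (M : Matrix (Fin m) (Fin n) (ZMod 2)) (B : Finset ℕ) : Prop :=
  ∀ v, M *ᵥ v = 0 → natSupport v ⊆ B → v = 0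

instance (M : Matrix (Fin m) (Fin n) (ZMod 2)) : DecidablePred (KerTrivialOn M) :=
  fun _ ↦ inferInstanceAs (Decidable (∀ _, _))

def kerSupports (M : Matrix (Fin m) (Fin n) (ZMod 2)) : Finset (Finset ℕ) :=
  ({v | M *ᵥ v = 0} : Finset (Fin n → ZMod 2)).image natSupport

theorem card_kerSupports (M : Matrix (Fin m) (Fin n) (ZMod 2)) :
    #(kerSupports M) = #{v | M *ᵥ v = 0} :=
  card_image_of_injective _ natSupport_injective

theorem isLeftCancellativePair_kerSupports (M : Matrix (Fin m) (Fin n) (ZMod 2))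
    {𝓑 : Finset (Finset ℕ)} (h𝓑 : ∀ B ∈ 𝓑, B ⊆ range n ∧ KerTrivialOn M B) :
    IsLeftCancellativePair (range n) (kerSupports M) 𝓑 := by
  refine ⟨?_, fun B hB ↦ (h𝓑 B hB).1, ?_⟩
  · simp only [kerSupports, mem_image]
    rintro _ ⟨v, -, rfl⟩
    exact natSupport_subset_range v
  · simp only [kerSupports, mem_image, mem_filter, mem_univ, true_and]
    rintro _ ⟨v, hv, rfl⟩ _ ⟨w, hw, rfl⟩ B hB hvw
    have hker : M *ᵥ (v + w) = 0 := by rw [mulVec_add, hv, hw, add_zero]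
    have hvw0 := (h𝓑 B hB).2 _ hker (natSupport_add_subset_of_sdiff_eq hvw)
    exact congrArg natSupport
      (funext fun j ↦ CharTwo.add_eq_zero.mp (by simpa using congrFun hvw0 j))

theorem card_not_kerTrivialOn_mul_le (B : Finset ℕ) :
    #{M : Matrix (Fin m) (Fin n) (ZMod 2) | ¬KerTrivialOn M B} * 2 ^ m ≤
      2 ^ #B * 2 ^ (m * n) := by
  let V : Finset (Fin n → ZMod 2) := {v | v ≠ 0 ∧ natSupport v ⊆ B}
  have hbad : ({M | ¬KerTrivialOn M B} : Finset (Matrix (Fin m) (Fin n) (ZMod 2))) ⊆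
      V.biUnion fun v ↦ {M | M *ᵥ v = 0} := by
    intro M hM
    obtain ⟨v, hv, hvB, hv0⟩ : ∃ v, M *ᵥ v = 0 ∧ natSupport v ⊆ B ∧ v ≠ 0 := by
      simpa [KerTrivialOn] using hM
    exact mem_biUnion.mpr ⟨v, by simp [V, hv0, hvB], by simp [hv]⟩
  have hV : #V ≤ 2 ^ #B := by
    rw [← card_powerset]
    refine card_le_card_of_injOn natSupport (fun v hv ↦ ?_) natSupport_injective.injOn
    simpa [V] using (mem_filter.mp hv).2.2
  calc #{M | ¬KerTrivialOn M B} * 2 ^ m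
        ≤ (∑ v ∈ V, #{M : Matrix _ _ _ | M *ᵥ v = 0}) * 2 ^ m := by
        gcongr
        exact (card_le_card hbad).trans card_biUnion_le
    _ = ∑ _v ∈ V, 2 ^ (m * n) := by
        rw [sum_mul]
        refine sum_congr rfl fun v hv ↦ ?_
        simpa using card_mulVec_eq_zero_mul (κ := Fin m) (mem_filter.mp hv).2.1
    _ ≤ 2 ^ #B * 2 ^ (m * n) := by
        rw [sum_const, smul_eq_mul]
        gcongr

theorem exists_card_powersetCard_le_two_mul_card_kerTrivialOn (n k : ℕ) :
    ∃ M : Matrix (Fin (k + 1)) (Fin n) (ZMod 2),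
      #(powersetCard k (range n)) ≤ 2 * #{B ∈ powersetCard k (range n) | KerTrivialOn M B} := by
  obtain ⟨M, hM⟩ := exists_mul_card_filter_le (powersetCard k (range n))
    (fun (M : Matrix (Fin (k + 1)) (Fin n) (ZMod 2)) B ↦ ¬KerTrivialOn M B) 2 fun B hB ↦ by
      have h := card_not_kerTrivialOn_mul_le (m := k + 1) (n := n) B
      rw [(mem_powersetCard.mp hB).2, pow_succ] at h
      have hcard : Fintype.card (Matrix (Fin (k + 1)) (Fin n) (ZMod 2)) = 2 ^ ((k + 1) * n) := by
        rw [← Nat.card_eq_fintype_card]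
        simp [Matrix, pow_mul']
      rw [hcard]
      exact Nat.le_of_mul_le_mul_left (by linarith) (pow_pos two_pos k)
  refine ⟨M, ?_⟩
  have := card_filter_add_card_filter_not (s := powersetCard k (range n))
    (fun B ↦ KerTrivialOn M B)
  omega

theorem exists_isLeftCancellativePair (n k : ℕ) :
    ∃ 𝓐 𝓑, IsLeftCancellativePair (range n) 𝓐 𝓑 ∧
      2 ^ n ≤ 2 ^ (k + 1) * #𝓐 ∧ n.choose k ≤ 2 * #𝓑 := by
  obtain ⟨M, hM⟩ := exists_card_powersetCard_le_two_mul_card_kerTrivialOn n k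
  refine ⟨kerSupports M, {B ∈ powersetCard k (range n) | KerTrivialOn M B},
    isLeftCancellativePair_kerSupports M fun B hB ↦ ?_, ?_, ?_⟩
  · obtain ⟨hBk, hB⟩ := mem_filter.mp hB
    exact ⟨(mem_powersetCard.mp hBk).1, hB⟩
  · simpa [card_kerSupports, mul_comm] using card_pow_le_card_mulVec_eq_zero_mul M
  · simpa using hM

end BinaryVectors

theorem exists_isLeftCancellativePair_three_pow_le (n : ℕ) :
    ∃ 𝓐 𝓑, IsLeftCancellativePair (range n) 𝓐 𝓑 ∧
      3 ^ n ≤ 4 * (n + 1) * (#𝓐 * #𝓑) := by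
  obtain ⟨k, hk, h3⟩ := Nat.exists_three_pow_le_mul_two_pow_mul_choose n
  obtain ⟨𝓐, 𝓑, hpair, h𝓐, h𝓑⟩ := exists_isLeftCancellativePair n k
  refine ⟨𝓐, 𝓑, hpair, Nat.le_of_mul_le_mul_left ?_ (pow_pos two_pos k)⟩
  calc 2 ^ k * 3 ^ n ≤ 2 ^ k * ((n + 1) * (2 ^ (n - k) * n.choose k)) := by gcongr
    _ = (n + 1) * (2 ^ n * n.choose k) := by
        rw [← Nat.add_sub_cancel' hk, pow_add, Nat.add_sub_cancel_left]
        ring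
    _ ≤ (n + 1) * (2 ^ (k + 1) * #𝓐 * (2 * #𝓑)) := by gcongr
    _ = 2 ^ k * (4 * (n + 1) * (#𝓐 * #𝓑)) := by ring

theorem eventually_mul_add_one_le_pow {c : ℝ} (hc : 1 < c) (a : ℝ) :
    ∀ᶠ n : ℕ in atTop, a * (n + 1) ≤ c ^ n := by
  have hlin : (fun n : ℕ ↦ a * ((n : ℝ) + 1)) =o[atTop] (c ^ ·) :=
    ((isLittleO_coe_const_pow_of_one_lt hc).add
      (isLittleO_const_left.mpr (.inr (tendsto_norm_atTop_atTop.comp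
        (tendsto_pow_atTop_atTop_of_one_lt hc))))).const_mul_left a
  filter_upwards [hlin.bound one_pos] with n hn
  simpa [abs_of_pos (zero_lt_one.trans hc)] using (le_abs_self _).trans hn

theorem stmt_4 (ε : ℝ) (hε : 0 < ε) :
    ∃ N : ℕ, ∀ n ≥ N, ∃ (X : Finset ℕ) (𝓐 𝓑 : Finset (Finset ℕ)),
      X.card = n ∧ IsLeftCancellativePair X 𝓐 𝓑 ∧
      (𝓐.card * 𝓑.card : ℝ) ≥ (3 : ℝ) ^ ((1 - ε) * n) := by
  obtain ⟨N, hN⟩ := eventually_atTop.mp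
    (eventually_mul_add_one_le_pow (Real.one_lt_rpow (by norm_num : (1 : ℝ) < 3) hε) 4)
  refine ⟨N, fun n hn ↦ ?_⟩
  obtain ⟨𝓐, 𝓑, hpair, hcard⟩ := exists_isLeftCancellativePair_three_pow_le n
  refine ⟨range n, 𝓐, 𝓑, card_range n, hpair,
    le_of_mul_le_mul_left ?_ (by positivity : (0 : ℝ) < 4 * (n + 1))⟩
  calc 4 * (n + 1) * (3 : ℝ) ^ ((1 - ε) * n) ≤ (3 ^ ε) ^ n * 3 ^ ((1 - ε) * n) := by
        gcongr
        exact hN n hn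
    _ = 3 ^ n := by
        rw [← Real.rpow_natCast, ← Real.rpow_mul (by norm_num), ← Real.rpow_add (by norm_num),
          ← Real.rpow_natCast]
        ring_nf
    _ ≤ 4 * (n + 1) * (#𝓐 * #𝓑) := by exact_mod_cast hcard
end

section
/- Let n, k be natural numbers with k ≤ n and let M be an n × (n−k) matrix over the field 𝔽₂ = ZMod 2. Identify each vector w ∈ 𝔽₂^n with the subset {i : w i = 1} of the index set. Let 𝓐_M = { support of M·v : v ∈ 𝔽₂^(n−k) } and let 𝓑_M = { complement of S : S is a set of n−k row indices such that the square submatrix of M formed by the rows indexed by S is invertible }. Then (𝓐_M, 𝓑_M) is a left-cancellative pair over the set of row indices. -/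
theorem stmt_5 (n k : ℕ) (hk : k ≤ n) (M : Matrix (Fin n) (Fin (n - k)) (ZMod 2))
    (𝓐 𝓑 : Set (Finset (Fin n)))
    (h𝓐 : 𝓐 = {A | ∃ v : Fin (n - k) → ZMod 2,
      A = Finset.univ.filter fun i => M.mulVec v i = 1})
    (h𝓑 : 𝓑 = {B | ∃ (S : Finset (Fin n)) (hS : S.card = n - k),
      IsUnit (M.submatrix (fun j : Fin (n - k) => ((S.orderIsoOfFin hS) j : Fin n)) id).det ∧
      B = Sᶜ}) :
    ∀ A ∈ 𝓐, ∀ A' ∈ 𝓐, ∀ B ∈ 𝓑, A \ B = A' \ B → A = A' := by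
  subst h𝓐 h𝓑
  rintro A ⟨v, rfl⟩ A' ⟨v', rfl⟩ B ⟨S, hS, hdet, rfl⟩ h
  set N := M.submatrix (fun j : Fin (n - k) => ((S.orderIsoOfFin hS) j : Fin n)) id with hN
  have hinj : Function.Injective N.mulVec :=
    Matrix.mulVec_injective_iff_isUnit.mpr ((Matrix.isUnit_iff_isUnit_det _).mpr hdet)
  have key : ∀ i ∈ S, M.mulVec v i = M.mulVec v' i := by
    intro i hi
    have h1 : i ∈ Finset.univ.filter (fun i => M.mulVec v i = 1) ↔
        i ∈ Finset.univ.filter (fun i => M.mulVec v' i = 1) := by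
      have := Finset.ext_iff.mp h i
      simp only [Finset.mem_sdiff, Finset.mem_compl, not_not] at this
      constructor
      · intro ha; exact (this.mp ⟨ha, hi⟩).1
      · intro ha; exact (this.mpr ⟨ha, hi⟩).1
    simp only [Finset.mem_filter, Finset.mem_univ, true_and] at h1
    rcases (by decide : ∀ x : ZMod 2, x = 0 ∨ x = 1) (M.mulVec v i) with h0 | h0
    · rcases (by decide : ∀ x : ZMod 2, x = 0 ∨ x = 1) (M.mulVec v' i) with h0' | h0'
      · rw [h0, h0']
      · exact absurd (h1.mpr h0') (by rw [h0]; decide)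
    · rw [h0, h1.mp h0]
  have hNv : N.mulVec v = N.mulVec v' := by
    funext j
    simp only [hN, Matrix.mulVec, Matrix.submatrix_apply, dotProduct, id]
    exact key _ ((S.orderIsoOfFin hS) j).2
  have hv : v = v' := hinj hNv
  rw [hv]
end

section
/- Let (𝓐, 𝓑) be a pair of families over a disjoint finite set X and (𝓐', 𝓑') a pair over a finite set X' with X ∩ X' = ∅, and define 𝓐'' = {A ∪ A' : A ∈ 𝓐, A' ∈ 𝓐'} and 𝓑'' = {B ∪ B' : B ∈ 𝓑, B' ∈ 𝓑'}. If (𝓐, 𝓑) and (𝓐', 𝓑') are both recovering pairs, then (𝓐'', 𝓑'') is a recovering pair over X ∪ X'; if both are cancellative pairs, then (𝓐'', 𝓑'') is a cancellative pair over X ∪ X'. Moreover, |𝓐''| · |𝓑''| = |𝓐| · |𝓑| · |𝓐'| · |𝓑'|. -/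
open Finset

section helpers
variable {X X' : Finset ℕ}

lemma union_comp (hd : Disjoint X X') {A A' C C' : Finset ℕ}
    (hA : A ⊆ X) (hA' : A' ⊆ X') (hC : C ⊆ X) (hC' : C' ⊆ X')
    (h : A ∪ A' = C ∪ C') : A = C ∧ A' = C' := by
  have hd' := Finset.disjoint_left.mp hd
  constructor <;> ext x <;> constructor <;> intro hx
  · have : x ∈ C ∪ C' := h ▸ Finset.mem_union_left _ hx
    rcases Finset.mem_union.mp this with h1 | h1
    · exact h1
    · exact absurd (hC' h1) (fun hh => hd' (hA hx) hh)
  · have : x ∈ A ∪ A' := h ▸ Finset.mem_union_left _ hx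
    rcases Finset.mem_union.mp this with h1 | h1
    · exact h1
    · exact absurd (hA' h1) (fun hh => hd' (hC hx) hh)
  · have : x ∈ C ∪ C' := h ▸ Finset.mem_union_right _ hx
    rcases Finset.mem_union.mp this with h1 | h1
    · exact absurd (hC h1) (fun hh => hd' hh (hA' hx))
    · exact h1
  · have : x ∈ A ∪ A' := h ▸ Finset.mem_union_right _ hx
    rcases Finset.mem_union.mp this with h1 | h1
    · exact absurd (hA h1) (fun hh => hd' hh (hC' hx))
    · exact h1

lemma sdiff_union (hd : Disjoint X X') {A A' B B' : Finset ℕ}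
    (hA : A ⊆ X) (hA' : A' ⊆ X') (hB : B ⊆ X) (hB' : B' ⊆ X') :
    (A ∪ A') \ (B ∪ B') = (A \ B) ∪ (A' \ B') := by
  have hd' := Finset.disjoint_left.mp hd
  ext x
  simp only [Finset.mem_sdiff, Finset.mem_union]
  constructor
  · rintro ⟨h1 | h1, h2⟩
    · exact Or.inl ⟨h1, fun hh => h2 (Or.inl hh)⟩
    · exact Or.inr ⟨h1, fun hh => h2 (Or.inr hh)⟩
  · rintro (⟨h1, h2⟩ | ⟨h1, h2⟩)
    · exact ⟨Or.inl h1, by rintro (hh | hh); exact h2 hh; exact hd' (hA h1) (hB' hh)⟩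
    · exact ⟨Or.inr h1, by rintro (hh | hh); exact hd' (hB hh) (hA' h1); exact h2 hh⟩

lemma card_img (hd : Disjoint X X') {S T : Finset (Finset ℕ)}
    (hS : ∀ A ∈ S, A ⊆ X) (hT : ∀ A ∈ T, A ⊆ X') :
    (Finset.image₂ (· ∪ ·) S T).card = S.card * T.card := by
  rw [Finset.card_image₂_iff]
  rintro ⟨a, b⟩ hab ⟨c, d⟩ hcd h
  simp only [Finset.coe_product, Set.mem_prod, Finset.mem_coe] at hab hcd
  obtain ⟨h1, h2⟩ := union_comp hd (hS _ hab.1) (hT _ hab.2) (hS _ hcd.1) (hT _ hcd.2) h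
  simp [h1, h2]
end helpers

/-- `(𝓐, 𝓑)` is a recovering pair over the ground set `X`. -/
def IsRecoveringPair (X : Finset ℕ) (𝓐 𝓑 : Finset (Finset ℕ)) : Prop :=
  (∀ A ∈ 𝓐, A ⊆ X) ∧ (∀ B ∈ 𝓑, B ⊆ X) ∧
  (∀ A ∈ 𝓐, ∀ A' ∈ 𝓐, ∀ B ∈ 𝓑, ∀ B' ∈ 𝓑, A \ B = A' \ B' → A = A') ∧
  (∀ A ∈ 𝓐, ∀ A' ∈ 𝓐, ∀ B ∈ 𝓑, ∀ B' ∈ 𝓑, B \ A = B' \ A' → B = B')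

/-- `(𝓐, 𝓑)` is a cancellative pair over the ground set `X`. -/
def IsCancellativePair (X : Finset ℕ) (𝓐 𝓑 : Finset (Finset ℕ)) : Prop :=
  (∀ A ∈ 𝓐, A ⊆ X) ∧ (∀ B ∈ 𝓑, B ⊆ X) ∧
  (∀ A ∈ 𝓐, ∀ A' ∈ 𝓐, ∀ B ∈ 𝓑, A \ B = A' \ B → A = A') ∧
  (∀ A ∈ 𝓐, ∀ B ∈ 𝓑, ∀ B' ∈ 𝓑, B \ A = B' \ A → B = B')

theorem stmt_8 (X X' : Finset ℕ) (hdisj : Disjoint X X')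
    (𝓐 𝓑 𝓐' 𝓑' : Finset (Finset ℕ))
    (h𝓐 : ∀ A ∈ 𝓐, A ⊆ X) (h𝓑 : ∀ B ∈ 𝓑, B ⊆ X)
    (h𝓐' : ∀ A ∈ 𝓐', A ⊆ X') (h𝓑' : ∀ B ∈ 𝓑', B ⊆ X')
    (𝓐'' 𝓑'' : Finset (Finset ℕ))
    (h𝓐'' : 𝓐'' = Finset.image₂ (· ∪ ·) 𝓐 𝓐')
    (h𝓑'' : 𝓑'' = Finset.image₂ (· ∪ ·) 𝓑 𝓑') :
    (IsRecoveringPair X 𝓐 𝓑 → IsRecoveringPair X' 𝓐' 𝓑' →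
      IsRecoveringPair (X ∪ X') 𝓐'' 𝓑'') ∧
    (IsCancellativePair X 𝓐 𝓑 → IsCancellativePair X' 𝓐' 𝓑' →
      IsCancellativePair (X ∪ X') 𝓐'' 𝓑'') ∧
    𝓐''.card * 𝓑''.card = 𝓐.card * 𝓑.card * 𝓐'.card * 𝓑'.card := by
  subst h𝓐'' h𝓑''
  have sub𝓐 : ∀ C ∈ Finset.image₂ (· ∪ ·) 𝓐 𝓐', C ⊆ X ∪ X' := by
    intro C hC
    obtain ⟨a, ha, a', ha', rfl⟩ := Finset.mem_image₂.mp hC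
    exact Finset.union_subset_union (h𝓐 a ha) (h𝓐' a' ha')
  have sub𝓑 : ∀ C ∈ Finset.image₂ (· ∪ ·) 𝓑 𝓑', C ⊆ X ∪ X' := by
    intro C hC
    obtain ⟨a, ha, a', ha', rfl⟩ := Finset.mem_image₂.mp hC
    exact Finset.union_subset_union (h𝓑 a ha) (h𝓑' a' ha')
  refine ⟨?_, ?_, ?_⟩
  · rintro ⟨_, _, hR1, hR2⟩ ⟨_, _, hR1', hR2'⟩
    refine ⟨sub𝓐, sub𝓑, ?_, ?_⟩
    · rintro U hU V hV W hW Z hZ h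
      obtain ⟨a, ha, a', ha', rfl⟩ := Finset.mem_image₂.mp hU
      obtain ⟨c, hc, c', hc', rfl⟩ := Finset.mem_image₂.mp hV
      obtain ⟨b, hb, b', hb', rfl⟩ := Finset.mem_image₂.mp hW
      obtain ⟨d, hd, d', hd', rfl⟩ := Finset.mem_image₂.mp hZ
      rw [sdiff_union hdisj (h𝓐 a ha) (h𝓐' a' ha') (h𝓑 b hb) (h𝓑' b' hb'),
          sdiff_union hdisj (h𝓐 c hc) (h𝓐' c' hc') (h𝓑 d hd) (h𝓑' d' hd')] at h
      obtain ⟨e1, e2⟩ := union_comp hdisj (Finset.sdiff_subset.trans (h𝓐 a ha))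
        ((Finset.sdiff_subset).trans (h𝓐' a' ha')) (Finset.sdiff_subset.trans (h𝓐 c hc))
        (Finset.sdiff_subset.trans (h𝓐' c' hc')) h
      rw [hR1 a ha c hc b hb d hd e1, hR1' a' ha' c' hc' b' hb' d' hd' e2]
    · rintro U hU V hV W hW Z hZ h
      obtain ⟨a, ha, a', ha', rfl⟩ := Finset.mem_image₂.mp hU
      obtain ⟨c, hc, c', hc', rfl⟩ := Finset.mem_image₂.mp hV
      obtain ⟨b, hb, b', hb', rfl⟩ := Finset.mem_image₂.mp hW
      obtain ⟨d, hd, d', hd', rfl⟩ := Finset.mem_image₂.mp hZ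
      rw [sdiff_union hdisj (h𝓑 b hb) (h𝓑' b' hb') (h𝓐 a ha) (h𝓐' a' ha'),
          sdiff_union hdisj (h𝓑 d hd) (h𝓑' d' hd') (h𝓐 c hc) (h𝓐' c' hc')] at h
      obtain ⟨e1, e2⟩ := union_comp hdisj (Finset.sdiff_subset.trans (h𝓑 b hb))
        (Finset.sdiff_subset.trans (h𝓑' b' hb')) (Finset.sdiff_subset.trans (h𝓑 d hd))
        (Finset.sdiff_subset.trans (h𝓑' d' hd')) h
      rw [hR2 a ha c hc b hb d hd e1, hR2' a' ha' c' hc' b' hb' d' hd' e2]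
  · rintro ⟨_, _, hC1, hC2⟩ ⟨_, _, hC1', hC2'⟩
    refine ⟨sub𝓐, sub𝓑, ?_, ?_⟩
    · rintro U hU V hV W hW h
      obtain ⟨a, ha, a', ha', rfl⟩ := Finset.mem_image₂.mp hU
      obtain ⟨c, hc, c', hc', rfl⟩ := Finset.mem_image₂.mp hV
      obtain ⟨b, hb, b', hb', rfl⟩ := Finset.mem_image₂.mp hW
      rw [sdiff_union hdisj (h𝓐 a ha) (h𝓐' a' ha') (h𝓑 b hb) (h𝓑' b' hb'),
          sdiff_union hdisj (h𝓐 c hc) (h𝓐' c' hc') (h𝓑 b hb) (h𝓑' b' hb')] at h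
      obtain ⟨e1, e2⟩ := union_comp hdisj (Finset.sdiff_subset.trans (h𝓐 a ha))
        (Finset.sdiff_subset.trans (h𝓐' a' ha')) (Finset.sdiff_subset.trans (h𝓐 c hc))
        (Finset.sdiff_subset.trans (h𝓐' c' hc')) h
      rw [hC1 a ha c hc b hb e1, hC1' a' ha' c' hc' b' hb' e2]
    · rintro U hU W hW Z hZ h
      obtain ⟨a, ha, a', ha', rfl⟩ := Finset.mem_image₂.mp hU
      obtain ⟨b, hb, b', hb', rfl⟩ := Finset.mem_image₂.mp hW
      obtain ⟨d, hd, d', hd', rfl⟩ := Finset.mem_image₂.mp hZ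
      rw [sdiff_union hdisj (h𝓑 b hb) (h𝓑' b' hb') (h𝓐 a ha) (h𝓐' a' ha'),
          sdiff_union hdisj (h𝓑 d hd) (h𝓑' d' hd') (h𝓐 a ha) (h𝓐' a' ha')] at h
      obtain ⟨e1, e2⟩ := union_comp hdisj (Finset.sdiff_subset.trans (h𝓑 b hb))
        (Finset.sdiff_subset.trans (h𝓑' b' hb')) (Finset.sdiff_subset.trans (h𝓑 d hd))
        (Finset.sdiff_subset.trans (h𝓑' d' hd')) h
      rw [hC2 a ha b hb d hd e1, hC2' a' ha' b' hb' d' hd' e2]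
  · rw [card_img hdisj h𝓐 h𝓐', card_img hdisj h𝓑 h𝓑']
    ring
end

section
/- Let μ > 0 and suppose that for all natural numbers n and k with k ≤ n, every k-uniform recovering pair (𝓐, 𝓑) over a ground set of size n satisfies |𝓐| · |𝓑| ≤ μ^n. Then every recovering pair (𝓐, 𝓑) over a ground set of size n (not necessarily uniform) satisfies |𝓐| · |𝓑| ≤ μ^n. -/
/-- `(𝓐, 𝓑)` is a `k`-uniform pair. -/
def IsUniformPair (k : ℕ) (𝓐 𝓑 : Finset (Finset ℕ)) : Prop :=
  (∀ A ∈ 𝓐, A.card = k) ∧ (∀ B ∈ 𝓑, B.card = k)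

open Finset Filter Asymptotics

def DiffDetermines (𝓐 𝓑 : Finset (Finset ℕ)) : Prop :=
  ∀ A ∈ 𝓐, ∀ A' ∈ 𝓐, ∀ B ∈ 𝓑, ∀ B' ∈ 𝓑, A \ B = A' \ B' → A = A'

lemma DiffDetermines.mono {𝓐 𝓑 𝓐' 𝓑' : Finset (Finset ℕ)} (h : DiffDetermines 𝓐 𝓑)
    (hA : 𝓐' ⊆ 𝓐) (hB : 𝓑' ⊆ 𝓑) : DiffDetermines 𝓐' 𝓑' :=
  fun A hA₁ A' hA₂ B hB₁ B' hB₂ => h A (hA hA₁) A' (hA hA₂) B (hB hB₁) B' (hB hB₂)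

lemma isRecoveringPair_iff {X : Finset ℕ} {𝓐 𝓑 : Finset (Finset ℕ)} :
    IsRecoveringPair X 𝓐 𝓑 ↔ (∀ A ∈ 𝓐, A ⊆ X) ∧ (∀ B ∈ 𝓑, B ⊆ X) ∧
      DiffDetermines 𝓐 𝓑 ∧ DiffDetermines 𝓑 𝓐 := by
  unfold IsRecoveringPair DiffDetermines
  refine and_congr_right' (and_congr_right' (and_congr_right' ⟨?_, ?_⟩)) <;>
    exact fun h B hB B' hB' A hA A' hA' => h A hA A' hA' B hB B' hB'

namespace IsRecoveringPair

variable {X : Finset ℕ} {𝓐 𝓑 : Finset (Finset ℕ)}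

lemma symm (h : IsRecoveringPair X 𝓐 𝓑) : IsRecoveringPair X 𝓑 𝓐 := by
  obtain ⟨hA, hB, hAB, hBA⟩ := isRecoveringPair_iff.mp h
  exact isRecoveringPair_iff.mpr ⟨hB, hA, hBA, hAB⟩

lemma mono {𝓐' 𝓑' : Finset (Finset ℕ)} (h : IsRecoveringPair X 𝓐 𝓑) (hA : 𝓐' ⊆ 𝓐)
    (hB : 𝓑' ⊆ 𝓑) : IsRecoveringPair X 𝓐' 𝓑' := by
  obtain ⟨hAX, hBX, hAB, hBA⟩ := isRecoveringPair_iff.mp h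
  exact isRecoveringPair_iff.mpr ⟨fun A h => hAX A (hA h), fun B h => hBX B (hB h),
    hAB.mono hA hB, hBA.mono hB hA⟩

end IsRecoveringPair

section TaggedUnion

variable {ι : Type*} [Fintype ι] [Encodable ι]

def taggedUnion (f : ι → Finset ℕ) : Finset ℕ :=
  univ.biUnion fun i => (f i).image (Nat.pair (Encodable.encode i))

lemma mem_taggedUnion {f : ι → Finset ℕ} {y : ℕ} :
    y ∈ taggedUnion f ↔ ∃ i, ∃ x ∈ f i, Nat.pair (Encodable.encode i) x = y := by
  simp [taggedUnion]

lemma pair_mem_taggedUnion {f : ι → Finset ℕ} {i : ι} {x : ℕ} :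
    Nat.pair (Encodable.encode i) x ∈ taggedUnion f ↔ x ∈ f i := by
  refine ⟨fun h => ?_, fun h => mem_taggedUnion.mpr ⟨i, x, h, rfl⟩⟩
  obtain ⟨j, y, hy, hyx⟩ := mem_taggedUnion.mp h
  obtain ⟨hji, rfl⟩ := Nat.pair_eq_pair.mp hyx
  rwa [← Encodable.encode_injective hji]

lemma taggedUnion_injective : Function.Injective (taggedUnion (ι := ι)) := fun f g h =>
  funext fun i => Finset.ext fun x => by
    rw [← pair_mem_taggedUnion (f := f), ← pair_mem_taggedUnion (f := g), h]

lemma taggedUnion_mono {f g : ι → Finset ℕ} (h : ∀ i, f i ⊆ g i) :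
    taggedUnion f ⊆ taggedUnion g :=
  biUnion_mono fun i _ => image_subset_image (h i)

lemma taggedUnion_sdiff (f g : ι → Finset ℕ) :
    taggedUnion f \ taggedUnion g = taggedUnion fun i => f i \ g i := by
  ext y
  rw [Finset.mem_sdiff, mem_taggedUnion (f := f), mem_taggedUnion (f := fun i => f i \ g i)]
  constructor
  · rintro ⟨⟨i, x, hx, rfl⟩, hy⟩
    exact ⟨i, x, Finset.mem_sdiff.mpr ⟨hx, fun h => hy (pair_mem_taggedUnion.mpr h)⟩, rfl⟩
  · rintro ⟨i, x, hx, rfl⟩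
    obtain ⟨hf, hg⟩ := Finset.mem_sdiff.mp hx
    exact ⟨⟨i, x, hf, rfl⟩, fun h => hg (pair_mem_taggedUnion.mp h)⟩

lemma card_taggedUnion (f : ι → Finset ℕ) : #(taggedUnion f) = ∑ i, #(f i) := by
  rw [taggedUnion, card_biUnion]
  · exact sum_congr rfl fun i _ =>
      card_image_of_injective _ fun _ _ h => (Nat.pair_eq_pair.mp h).2
  · intro i _ j _ hij
    simp only [disjoint_left, mem_image]
    rintro _ ⟨x, _, rfl⟩ ⟨y, _, hyx⟩
    exact hij (Encodable.encode_injective (Nat.pair_eq_pair.mp hyx).1.symm)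

variable [DecidableEq ι] {P Q : ι → Finset (Finset ℕ)}

lemma DiffDetermines.pi (h : ∀ i, DiffDetermines (P i) (Q i)) :
    DiffDetermines ((Fintype.piFinset P).image taggedUnion)
      ((Fintype.piFinset Q).image taggedUnion) := by
  simp only [DiffDetermines, forall_mem_image, Fintype.mem_piFinset]
  intro f hf f' hf' g hg g' hg' hfg
  rw [taggedUnion_sdiff, taggedUnion_sdiff] at hfg
  exact congrArg taggedUnion <| funext fun i =>
    h i _ (hf i) _ (hf' i) _ (hg i) _ (hg' i) (congrFun (taggedUnion_injective hfg) i)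

lemma IsRecoveringPair.pi {X : ι → Finset ℕ} (h : ∀ i, IsRecoveringPair (X i) (P i) (Q i)) :
    IsRecoveringPair (taggedUnion X) ((Fintype.piFinset P).image taggedUnion)
      ((Fintype.piFinset Q).image taggedUnion) := by
  simp only [isRecoveringPair_iff] at h
  refine isRecoveringPair_iff.mpr ⟨?_, ?_, DiffDetermines.pi fun i => (h i).2.2.1,
    DiffDetermines.pi fun i => (h i).2.2.2⟩ <;> simp only [forall_mem_image, Fintype.mem_piFinset]
  · exact fun f hf => taggedUnion_mono fun i => (h i).1 _ (hf i)
  · exact fun f hf => taggedUnion_mono fun i => (h i).2.1 _ (hf i)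

lemma card_image_taggedUnion_piFinset (P : ι → Finset (Finset ℕ)) :
    #((Fintype.piFinset P).image taggedUnion) = ∏ i, #(P i) := by
  rw [card_image_of_injective _ taggedUnion_injective, Fintype.card_piFinset]

lemma card_filter_image_taggedUnion_piFinset_comp (σ : Equiv.Perm ι)
    (P : ι → Finset (Finset ℕ)) (k : ℕ) :
    #(((Fintype.piFinset (P ∘ σ)).image taggedUnion).filter (#· = k)) =
      #(((Fintype.piFinset P).image taggedUnion).filter (#· = k)) := by
  simp only [filter_image, card_image_of_injective _ taggedUnion_injective]
  refine card_nbij' (· ∘ σ.symm) (· ∘ σ) ?_ ?_ (fun f _ => funext fun i => by simp)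
    (fun f _ => funext fun i => by simp)
  · intro f hf
    simp only [coe_filter, Set.mem_ofPred_eq, Fintype.mem_piFinset, card_taggedUnion] at hf ⊢
    exact ⟨fun i => by simpa using hf.1 (σ.symm i),
      (Equiv.sum_comp σ.symm fun i => #(f i)).trans hf.2⟩
  · intro f hf
    simp only [coe_filter, Set.mem_ofPred_eq, Fintype.mem_piFinset, card_taggedUnion] at hf ⊢
    exact ⟨fun i => hf.1 (σ i), (Equiv.sum_comp σ fun i => #(f i)).trans hf.2⟩

end TaggedUnion

lemma card_le_of_card_filter_card_le {α : Type*} {Y : Finset α} {𝓒 : Finset (Finset α)}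
    (hY : ∀ S ∈ 𝓒, S ⊆ Y) {t : ℝ} (ht : ∀ k ≤ #Y, (#(𝓒.filter (#· = k)) : ℝ) ≤ t) :
    (#𝓒 : ℝ) ≤ (#Y + 1) * t := by
  have hfib : #𝓒 = ∑ k ∈ range (#Y + 1), #(𝓒.filter (#· = k)) :=
    card_eq_sum_card_fiberwise fun S hS => mem_range_succ_iff.mpr (card_le_card (hY S hS))
  calc (#𝓒 : ℝ) = ∑ k ∈ range (#Y + 1), (#(𝓒.filter (#· = k)) : ℝ) := by exact_mod_cast hfib
    _ ≤ #(range (#Y + 1)) • t :=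
      sum_le_card_nsmul _ _ _ fun k hk => ht k (mem_range_succ_iff.mp hk)
    _ = (#Y + 1) * t := by simp

lemma le_of_forall_pow_le_mul_pow {a b C : ℝ} (hb : 0 < b)
    (h : ∀ m : ℕ, a ^ m ≤ C * (m + 1) * b ^ m) : a ≤ b := by
  by_contra! hba
  have hr : 1 < a / b := (one_lt_div hb).mpr hba
  have hlin : (fun m : ℕ => C * ((m : ℝ) + 1)) =o[atTop] fun m => (a / b) ^ m := by
    refine IsLittleO.const_mul_left (IsLittleO.add ?_ ?_) C
    · simpa using isLittleO_pow_const_const_pow_of_one_lt 1 hr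
    · exact (isLittleO_one_left_iff ℝ).mpr <| by
        simpa [abs_of_pos hb, abs_of_pos (hb.trans hba)] using tendsto_pow_atTop_atTop_of_one_lt hr
  obtain ⟨m, hm⟩ := (hlin.def one_half_pos).exists
  have hpow : (a / b) ^ m ≤ C * (m + 1) := by
    rw [div_pow, div_le_iff₀ (pow_pos hb m)]
    exact h m
  have hpos : 0 < (a / b) ^ m := pow_pos (one_pos.trans hr) m
  rw [Real.norm_of_nonneg hpos.le] at hm
  linarith [Real.le_norm_self (C * ((m : ℝ) + 1))]

lemma pow_card_mul_card_le {μ : ℝ} (hμ : 0 ≤ μ)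
    (huni : ∀ (k : ℕ) (Y : Finset ℕ) (𝓒 𝓓 : Finset (Finset ℕ)), k ≤ #Y →
      IsRecoveringPair Y 𝓒 𝓓 → IsUniformPair k 𝓒 𝓓 → (#𝓒 * #𝓓 : ℝ) ≤ μ ^ #Y)
    {X : Finset ℕ} {𝓐 𝓑 : Finset (Finset ℕ)} (hrec : IsRecoveringPair X 𝓐 𝓑) (m : ℕ) :
    (#𝓐 * #𝓑 : ℝ) ^ m ≤ (2 * m * #X + 1) * μ ^ (m * #X) := by
  let P : Fin m × Bool → Finset (Finset ℕ) := fun p => bif p.2 then 𝓑 else 𝓐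
  let σ : Equiv.Perm (Fin m × Bool) :=
    Equiv.prodCongr (Equiv.refl _) (Bool.involutive_not.toPerm _)
  let Y := taggedUnion fun _ : Fin m × Bool => X
  let 𝓒 := (Fintype.piFinset P).image taggedUnion
  let 𝓓 := (Fintype.piFinset (P ∘ σ)).image taggedUnion
  have hY : #Y = 2 * m * #X := by
    simp only [Y, card_taggedUnion, sum_const, card_univ, Fintype.card_prod, Fintype.card_fin,
      Fintype.card_bool, smul_eq_mul]
    ring
  have hC : (#𝓒 : ℝ) = (#𝓐 * #𝓑) ^ m := by
    simp [𝓒, P, card_image_taggedUnion_piFinset, Fintype.prod_prod_type, mul_comm]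
  have hCD : IsRecoveringPair Y 𝓒 𝓓 := IsRecoveringPair.pi fun
    | (_, false) => hrec
    | (_, true) => hrec.symm
  have hslice : ∀ k ≤ #Y, (#(𝓒.filter (#· = k)) : ℝ) ≤ μ ^ (m * #X) := by
    intro k hk
    have h := huni k Y _ _ hk (hCD.mono (filter_subset _ _) (filter_subset _ _))
      ⟨fun S hS => (mem_filter.mp hS).2, fun S hS => (mem_filter.mp hS).2⟩
    rw [card_filter_image_taggedUnion_piFinset_comp, hY, ← sq,
      show 2 * m * #X = m * #X * 2 by ring, pow_mul] at h
    exact (pow_le_pow_iff_left₀ (Nat.cast_nonneg _) (pow_nonneg hμ _) two_ne_zero).mp h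
  calc (#𝓐 * #𝓑 : ℝ) ^ m = #𝓒 := hC.symm
    _ ≤ (#Y + 1) * μ ^ (m * #X) := card_le_of_card_filter_card_le hCD.1 hslice
    _ = (2 * m * #X + 1) * μ ^ (m * #X) := by rw [hY]; push_cast; rfl

theorem stmt_10 (μ : ℝ) (hμ : 0 < μ)
    (huni : ∀ (n k : ℕ), k ≤ n → ∀ (X : Finset ℕ) (𝓐 𝓑 : Finset (Finset ℕ)),
      X.card = n → IsRecoveringPair X 𝓐 𝓑 → IsUniformPair k 𝓐 𝓑 →
      (𝓐.card * 𝓑.card : ℝ) ≤ μ ^ n)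
    (n : ℕ) (X : Finset ℕ) (hX : X.card = n)
    (𝓐 𝓑 : Finset (Finset ℕ)) (hrec : IsRecoveringPair X 𝓐 𝓑) :
    (𝓐.card * 𝓑.card : ℝ) ≤ μ ^ n := by
  subst hX
  have hpow := pow_card_mul_card_le hμ.le (fun k Y _ _ hk => huni _ k hk Y _ _ rfl) hrec
  refine le_of_forall_pow_le_mul_pow (C := 2 * #X + 1) (pow_pos hμ _) fun m => ?_
  calc (#𝓐 * #𝓑 : ℝ) ^ m ≤ (2 * m * #X + 1) * μ ^ (m * #X) := hpow m
    _ ≤ (2 * #X + 1) * (m + 1) * (μ ^ #X) ^ m := by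
      rw [← pow_mul, mul_comm #X m]
      gcongr
      nlinarith [(Nat.cast_nonneg (#X) : (0 : ℝ) ≤ #X), (Nat.cast_nonneg m : (0 : ℝ) ≤ m)]
end

section
/- Let (𝓐, 𝓑) be a cancellative pair over a finite set X and let P ⊆ S ⊆ C ⊆ X, with C ≠ X, be such that S = C \ B for some B ∈ 𝓑. Then |𝓐_{C,S,P}| = |{A ∈ 𝓐 : A ∩ S = P}| and |𝓑_{C,S}| = |{B ∈ 𝓑 : C \ B = S}|, where (𝓐_{C,S,P}, 𝓑_{C,S}) is the filtered pair of (𝓐, 𝓑). -/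
/-- The first family of the filtered pair: `{A \ C : A ∈ 𝓐, A ∩ S = P}`. -/
def filteredA (𝓐 : Finset (Finset ℕ)) (C S P : Finset ℕ) : Finset (Finset ℕ) :=
  (𝓐.filter fun A => A ∩ S = P).image fun A => A \ C

/-- The second family of the filtered pair: `{B \ C : B ∈ 𝓑, C \ B = S}`. -/
def filteredB (𝓑 : Finset (Finset ℕ)) (C S : Finset ℕ) : Finset (Finset ℕ) :=
  (𝓑.filter fun B => C \ B = S).image fun B => B \ C

theorem stmt_13 (X : Finset ℕ) (𝓐 𝓑 : Finset (Finset ℕ))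
    (hcan : IsCancellativePair X 𝓐 𝓑)
    (P S C : Finset ℕ) (hPS : P ⊆ S) (hSC : S ⊆ C) (hCX : C ⊆ X) (hCne : C ≠ X)
    (hS : ∃ B ∈ 𝓑, S = C \ B) :
    (filteredA 𝓐 C S P).card = (𝓐.filter fun A => A ∩ S = P).card ∧
    (filteredB 𝓑 C S).card = (𝓑.filter fun B => C \ B = S).card := by
  obtain ⟨B₀, hB₀, hSB₀⟩ := hS
  constructor
  · apply Finset.card_image_of_injOn
    intro A hA A' hA' hAC
    simp only [Finset.mem_coe, Finset.mem_filter] at hA hA'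
    replace hAC : A \ C = A' \ C := hAC
    apply hcan.2.2.1 A hA.1 A' hA'.1 B₀ hB₀
    ext x
    simp only [Finset.mem_sdiff]
    constructor
    · rintro ⟨hxA, hxB⟩
      by_cases hxC : x ∈ C
      · have hxS : x ∈ S := hSB₀ ▸ Finset.mem_sdiff.mpr ⟨hxC, hxB⟩
        have hxP : x ∈ P := by rw [← hA.2]; exact Finset.mem_inter.mpr ⟨hxA, hxS⟩
        have : x ∈ A' ∩ S := by rw [hA'.2]; exact hxP
        exact ⟨(Finset.mem_inter.mp this).1, hxB⟩
      · have : x ∈ A' \ C := hAC ▸ Finset.mem_sdiff.mpr ⟨hxA, hxC⟩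
        exact ⟨(Finset.mem_sdiff.mp this).1, hxB⟩
    · rintro ⟨hxA, hxB⟩
      by_cases hxC : x ∈ C
      · have hxS : x ∈ S := hSB₀ ▸ Finset.mem_sdiff.mpr ⟨hxC, hxB⟩
        have hxP : x ∈ P := by rw [← hA'.2]; exact Finset.mem_inter.mpr ⟨hxA, hxS⟩
        have : x ∈ A ∩ S := by rw [hA.2]; exact hxP
        exact ⟨(Finset.mem_inter.mp this).1, hxB⟩
      · have : x ∈ A \ C := hAC ▸ Finset.mem_sdiff.mpr ⟨hxA, hxC⟩
        exact ⟨(Finset.mem_sdiff.mp this).1, hxB⟩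
  · apply Finset.card_image_of_injOn
    intro B hB B' hB' hBC
    simp only [Finset.mem_coe, Finset.mem_filter] at hB hB'
    replace hBC : B \ C = B' \ C := hBC
    ext x
    by_cases hxC : x ∈ C
    · have h1 : (x ∈ B ↔ x ∉ S) := by
        rw [← hB.2]; simp [Finset.mem_sdiff, hxC]
      have h2 : (x ∈ B' ↔ x ∉ S) := by
        rw [← hB'.2]; simp [Finset.mem_sdiff, hxC]
      rw [h1, h2]
    · constructor
      · intro hx
        have : x ∈ B' \ C := hBC ▸ Finset.mem_sdiff.mpr ⟨hx, hxC⟩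
        exact (Finset.mem_sdiff.mp this).1
      · intro hx
        have : x ∈ B \ C := hBC ▸ Finset.mem_sdiff.mpr ⟨hx, hxC⟩
        exact (Finset.mem_sdiff.mp this).1
end

section
/- Let (𝓐, 𝓑) be a recovering pair over a finite set X and let P ⊆ S ⊆ C ⊆ X. Then the filtered pair (𝓐_{C,S,P}, 𝓑_{C,S}) is a cancellative pair over X \ C. -/
theorem stmt_14 (X : Finset ℕ) (𝓐 𝓑 : Finset (Finset ℕ))
    (hrec : IsRecoveringPair X 𝓐 𝓑)
    (P S C : Finset ℕ) (hPS : P ⊆ S) (hSC : S ⊆ C) (hCX : C ⊆ X) :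
    IsCancellativePair (X \ C) (filteredA 𝓐 C S P) (filteredB 𝓑 C S) := by
  obtain ⟨hAX, hBX, hr1, hr2⟩ := hrec
  refine ⟨?_, ?_, ?_, ?_⟩
  · intro a ha
    simp only [filteredA, Finset.mem_image, Finset.mem_filter] at ha
    obtain ⟨A, ⟨hA, _⟩, rfl⟩ := ha
    intro x hx
    simp only [Finset.mem_sdiff] at hx ⊢
    exact ⟨hAX A hA hx.1, hx.2⟩
  · intro b hb
    simp only [filteredB, Finset.mem_image, Finset.mem_filter] at hb
    obtain ⟨B, ⟨hB, _⟩, rfl⟩ := hb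
    intro x hx
    simp only [Finset.mem_sdiff] at hx ⊢
    exact ⟨hBX B hB hx.1, hx.2⟩
  · intro a ha a' ha' b hb heq
    simp only [filteredA, filteredB, Finset.mem_image, Finset.mem_filter] at ha ha' hb
    obtain ⟨A, ⟨hA, hAP⟩, rfl⟩ := ha
    obtain ⟨A', ⟨hA', hAP'⟩, rfl⟩ := ha'
    obtain ⟨B, ⟨hB, hBS⟩, rfl⟩ := hb
    have key : A \ B = A' \ B := by
      ext x
      by_cases hxC : x ∈ C
      · simp only [Finset.mem_sdiff]
        constructor
        · rintro ⟨hxA, hxB⟩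
          have hxS : x ∈ S := hBS ▸ Finset.mem_sdiff.mpr ⟨hxC, hxB⟩
          have hxP : x ∈ P := hAP ▸ Finset.mem_inter.mpr ⟨hxA, hxS⟩
          have : x ∈ A' ∩ S := hAP' ▸ hxP
          exact ⟨(Finset.mem_inter.mp this).1, hxB⟩
        · rintro ⟨hxA, hxB⟩
          have hxS : x ∈ S := hBS ▸ Finset.mem_sdiff.mpr ⟨hxC, hxB⟩
          have hxP : x ∈ P := hAP' ▸ Finset.mem_inter.mpr ⟨hxA, hxS⟩
          have : x ∈ A ∩ S := hAP ▸ hxP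
          exact ⟨(Finset.mem_inter.mp this).1, hxB⟩
      · have h1 := Finset.ext_iff.mp heq x
        simp only [Finset.mem_sdiff] at h1 ⊢
        constructor
        · rintro ⟨hxA, hxB⟩
          obtain ⟨⟨hxA', _⟩, hxB'⟩ := h1.mp ⟨⟨hxA, hxC⟩, fun h => hxB h.1⟩
          exact ⟨hxA', fun h => hxB' ⟨h, hxC⟩⟩
        · rintro ⟨hxA, hxB⟩
          obtain ⟨⟨hxA', _⟩, hxB'⟩ := h1.mpr ⟨⟨hxA, hxC⟩, fun h => hxB h.1⟩
          exact ⟨hxA', fun h => hxB' ⟨h, hxC⟩⟩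
    rw [hr1 A hA A' hA' B hB B hB key]
  · intro a ha b hb b' hb' heq
    simp only [filteredA, filteredB, Finset.mem_image, Finset.mem_filter] at ha hb hb'
    obtain ⟨A, ⟨hA, hAP⟩, rfl⟩ := ha
    obtain ⟨B, ⟨hB, hBS⟩, rfl⟩ := hb
    obtain ⟨B', ⟨hB', hBS'⟩, rfl⟩ := hb'
    have key : B \ A = B' \ A := by
      ext x
      by_cases hxC : x ∈ C
      · simp only [Finset.mem_sdiff]
        have h1 : x ∈ B ↔ x ∉ S := by
          rw [← hBS]; simp [Finset.mem_sdiff, hxC]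
        have h2 : x ∈ B' ↔ x ∉ S := by
          rw [← hBS']; simp [Finset.mem_sdiff, hxC]
        rw [h1, h2]
      · have h1 := Finset.ext_iff.mp heq x
        simp only [Finset.mem_sdiff] at h1 ⊢
        constructor
        · rintro ⟨hxB, hxA⟩
          obtain ⟨⟨hxB', _⟩, hxA'⟩ := h1.mp ⟨⟨hxB, hxC⟩, fun h => hxA h.1⟩
          exact ⟨hxB', fun h => hxA' ⟨h, hxC⟩⟩
        · rintro ⟨hxB, hxA⟩
          obtain ⟨⟨hxB', _⟩, hxA'⟩ := h1.mpr ⟨⟨hxB, hxC⟩, fun h => hxA h.1⟩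
          exact ⟨hxB', fun h => hxA' ⟨h, hxC⟩⟩
    rw [hr2 A hA A hA B hB B' hB' key]
end

section
/- Let (𝓐, 𝓑) be a recovering pair over a finite set X with 𝓐 nonempty, and for i ∈ X let a_i = |{A ∈ 𝓐 : i ∈ A}| / |𝓐|. Let S ⊆ C ⊆ X be such that S = C \ B for some B ∈ 𝓑. Then there exists a subset P ⊆ S such that log₂(|𝓐_{C,S,P}| / |𝓐|) ≥ −∑_{i ∈ S} h(a_i). -/
/-- The binary entropy function `h(p) = -p log₂ p - (1-p) log₂ (1-p)`
(with the conventions `h(0) = h(1) = 0`, automatic since `logb 2 0 = 0`). -/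
noncomputable def binEnt (p : ℝ) : ℝ :=
  -(p * Real.logb 2 p) - (1 - p) * Real.logb 2 (1 - p)

/-!
Let `r P` be the fraction of sets `A ∈ 𝓐` with `A ∩ S = P`: a probability distribution on the
subsets of `S` whose marginals are the `a i`. Comparing it (Gibbs' inequality) with the product
distribution `Q` of its marginals gives `-∑ h(a i) = ∑ r log Q ≤ log (max r)`, so some fibre has
mass at least `2 ^ (-∑ h(a i))`. Since `S = C \ B`, we have `A \ B = (A ∩ S) ∪ ((A \ C) \ B)`, so on
the fibre over `P` the set `A \ C` determines `A \ B` and hence, by recovery, `A`; the fibre and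
`𝓐_{C,S,P}` therefore have the same size.
-/

open Finset Real

theorem mul_logb_le_mul_logb_add {b r q M : ℝ} (hb : 1 < b) (hr : 0 ≤ r) (hrM : r ≤ M)
    (hq : 0 ≤ q) (hpos : 0 < r → 0 < q) :
    r * logb b q ≤ r * logb b M + (q - r) / log b := by
  have hlogb : 0 < log b := log_pos hb
  rcases hr.eq_or_lt with rfl | hr
  · simpa using div_nonneg hq hlogb.le
  have hq := hpos hr
  have hgibbs : logb b (q / r) ≤ (q / r - 1) / log b :=
    div_le_div_of_nonneg_right (log_le_sub_one_of_pos (div_pos hq hr)) hlogb.le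
  calc r * logb b q = r * logb b r + r * logb b (q / r) := by
        rw [logb_div hq.ne' hr.ne']; ring
    _ ≤ r * logb b M + r * ((q / r - 1) / log b) := by gcongr
    _ = r * logb b M + (q - r) / log b := by field_simp

theorem exists_sum_mul_logb_le_logb {ι : Type*} {b : ℝ} (hb : 1 < b) {s : Finset ι}
    {r q : ι → ℝ} (hr : ∀ i ∈ s, 0 ≤ r i) (hr1 : ∑ i ∈ s, r i = 1)
    (hq : ∀ i ∈ s, 0 ≤ q i) (hq1 : ∑ i ∈ s, q i ≤ 1) (hpos : ∀ i ∈ s, 0 < r i → 0 < q i) :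
    ∃ j ∈ s, ∑ i ∈ s, r i * logb b (q i) ≤ logb b (r j) := by
  have hs : s.Nonempty := nonempty_of_sum_ne_zero (hr1 ▸ one_ne_zero)
  obtain ⟨j, hj, hmax⟩ := exists_max_image s r hs
  refine ⟨j, hj, ?_⟩
  have hlogb : 0 < log b := log_pos hb
  calc ∑ i ∈ s, r i * logb b (q i)
      ≤ ∑ i ∈ s, (r i * logb b (r j) + (q i - r i) / log b) :=
        sum_le_sum fun i hi => mul_logb_le_mul_logb_add hb (hr i hi) (hmax i hi) (hq i hi)
          (hpos i hi)
    _ = logb b (r j) + (∑ i ∈ s, q i - 1) / log b := by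
        rw [sum_add_distrib, ← sum_mul, hr1, ← sum_div, sum_sub_distrib, hr1, one_mul]
    _ ≤ logb b (r j) := by
        have : (∑ i ∈ s, q i - 1) / log b ≤ 0 :=
          div_nonpos_of_nonpos_of_nonneg (by linarith) hlogb.le
        linarith

section ProductWeight

variable {α : Type*} [DecidableEq α]

def productWeight (a : α → ℝ) (S P : Finset α) : ℝ :=
  ∏ i ∈ S, if i ∈ P then a i else 1 - a i

theorem sum_productWeight (a : α → ℝ) (S : Finset α) :
    ∑ P ∈ S.powerset, productWeight a S P = 1 := by
  calc ∑ P ∈ S.powerset, productWeight a S P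
      = ∑ P ∈ S.powerset, (∏ i ∈ P, a i) * ∏ i ∈ S \ P, (1 - a i) := by
        refine sum_congr rfl fun P hP => ?_
        rw [productWeight, prod_ite, filter_mem_eq_inter, inter_eq_right.mpr (mem_powerset.mp hP),
          filter_not, filter_mem_eq_inter, inter_eq_right.mpr (mem_powerset.mp hP)]
    _ = ∏ i ∈ S, (a i + (1 - a i)) := (prod_add _ _ _).symm
    _ = 1 := by simp

variable {S : Finset α} {r : Finset α → ℝ} {a : α → ℝ}

theorem one_sub_eq_sum_filter_not_mem (hr1 : ∑ P ∈ S.powerset, r P = 1)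
    (ha : ∀ i ∈ S, a i = ∑ P ∈ S.powerset with i ∈ P, r P) {i : α} (hi : i ∈ S) :
    1 - a i = ∑ P ∈ S.powerset with i ∉ P, r P := by
  rw [← hr1, ← sum_filter_add_sum_filter_not S.powerset (i ∈ ·), ha i hi]
  ring

theorem le_ite_of_marginals (hr : ∀ P, 0 ≤ r P) (hr1 : ∑ P ∈ S.powerset, r P = 1)
    (ha : ∀ i ∈ S, a i = ∑ P ∈ S.powerset with i ∈ P, r P) {P : Finset α} (hP : P ⊆ S) :
    ∀ i ∈ S, r P ≤ if i ∈ P then a i else 1 - a i := by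
  intro i hi
  have hPS : P ∈ S.powerset := mem_powerset.mpr hP
  split_ifs with hiP
  · rw [ha i hi]
    exact single_le_sum (fun P _ => hr P) (mem_filter.mpr ⟨hPS, hiP⟩)
  · rw [one_sub_eq_sum_filter_not_mem hr1 ha hi]
    exact single_le_sum (fun P _ => hr P) (mem_filter.mpr ⟨hPS, hiP⟩)

theorem productWeight_nonneg (hr : ∀ P, 0 ≤ r P) (hr1 : ∑ P ∈ S.powerset, r P = 1)
    (ha : ∀ i ∈ S, a i = ∑ P ∈ S.powerset with i ∈ P, r P) {P : Finset α} (hP : P ⊆ S) :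
    0 ≤ productWeight a S P :=
  prod_nonneg fun i hi => (hr P).trans (le_ite_of_marginals hr hr1 ha hP i hi)

theorem productWeight_pos (hr : ∀ P, 0 ≤ r P) (hr1 : ∑ P ∈ S.powerset, r P = 1)
    (ha : ∀ i ∈ S, a i = ∑ P ∈ S.powerset with i ∈ P, r P) {P : Finset α} (hP : P ⊆ S)
    (hrP : 0 < r P) : 0 < productWeight a S P :=
  prod_pos fun i hi => hrP.trans_le (le_ite_of_marginals hr hr1 ha hP i hi)

theorem sum_mul_logb_productWeight (hr : ∀ P, 0 ≤ r P) (hr1 : ∑ P ∈ S.powerset, r P = 1)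
    (ha : ∀ i ∈ S, a i = ∑ P ∈ S.powerset with i ∈ P, r P) :
    ∑ P ∈ S.powerset, r P * logb 2 (productWeight a S P) = -∑ i ∈ S, binEnt (a i) := by
  have hterm : ∀ P ∈ S.powerset, r P * logb 2 (productWeight a S P)
      = ∑ i ∈ S, r P * if i ∈ P then logb 2 (a i) else logb 2 (1 - a i) := by
    intro P hP
    rcases (hr P).eq_or_lt with h0 | h0
    · simp [← h0]
    have hfac := le_ite_of_marginals hr hr1 ha (mem_powerset.mp hP)
    rw [← mul_sum, productWeight, logb_prod _ _ fun i hi => (h0.trans_le (hfac i hi)).ne']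
    exact congrArg _ (sum_congr rfl fun i _ => apply_ite (logb 2) _ _ _)
  rw [sum_congr rfl hterm, sum_comm, ← sum_neg_distrib]
  refine sum_congr rfl fun i hi => ?_
  simp_rw [mul_ite]
  rw [sum_ite, ← sum_mul, ← sum_mul, ← ha i hi, ← one_sub_eq_sum_filter_not_mem hr1 ha hi, binEnt]
  ring

theorem exists_logb_le_of_marginals (hr : ∀ P, 0 ≤ r P) (hr1 : ∑ P ∈ S.powerset, r P = 1)
    (ha : ∀ i ∈ S, a i = ∑ P ∈ S.powerset with i ∈ P, r P) :
    ∃ P ⊆ S, -∑ i ∈ S, binEnt (a i) ≤ logb 2 (r P) := by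
  obtain ⟨P, hP, hlog⟩ := exists_sum_mul_logb_le_logb one_lt_two (fun P _ => hr P) hr1
    (fun P hP => productWeight_nonneg hr hr1 ha (mem_powerset.mp hP))
    (sum_productWeight a S).le
    (fun P hP => productWeight_pos hr hr1 ha (mem_powerset.mp hP))
  exact ⟨P, mem_powerset.mp hP, sum_mul_logb_productWeight hr hr1 ha ▸ hlog⟩

end ProductWeight

section Fibres

variable {α : Type*} [DecidableEq α] (𝓐 : Finset (Finset α)) (S : Finset α)

theorem sum_card_filter_inter_eq :
    ∑ P ∈ S.powerset, #{A ∈ 𝓐 | A ∩ S = P} = #𝓐 :=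
  (card_eq_sum_card_fiberwise fun _ _ => mem_powerset.mpr inter_subset_right).symm

theorem card_filter_mem_eq_sum {i : α} (hi : i ∈ S) :
    #{A ∈ 𝓐 | i ∈ A} = ∑ P ∈ S.powerset with i ∈ P, #{A ∈ 𝓐 | A ∩ S = P} := by
  rw [card_eq_sum_card_fiberwise (t := S.powerset.filter (i ∈ ·)) fun A hA =>
    mem_filter.mpr ⟨mem_powerset.mpr inter_subset_right, mem_inter.mpr ⟨(mem_filter.mp hA).2, hi⟩⟩]
  refine sum_congr rfl fun P hP => ?_
  rw [filter_filter]
  congr 1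
  refine filter_congr fun A _ => ⟨And.right, fun hAP => ⟨?_, hAP⟩⟩
  exact (mem_inter.mp (hAP ▸ (mem_filter.mp hP).2)).1

end Fibres

theorem card_filteredA_eq {𝓐 : Finset (Finset ℕ)} {B C S : Finset ℕ}
    (hinj : ∀ A ∈ 𝓐, ∀ A' ∈ 𝓐, A \ B = A' \ B → A = A') (hS : S = C \ B) (P : Finset ℕ) :
    #(filteredA 𝓐 C S P) = #{A ∈ 𝓐 | A ∩ S = P} := by
  have hdecomp : ∀ A : Finset ℕ, A \ B = (A ∩ S) ∪ ((A \ C) \ B) := fun A => by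
    ext x; simp only [hS, mem_sdiff, mem_union, mem_inter]; tauto
  refine card_image_of_injOn fun A hA A' hA' hAA' => hinj A (mem_filter.mp hA).1 A'
    (mem_filter.mp hA').1 ?_
  rw [hdecomp A, hdecomp A', (mem_filter.mp hA).2, (mem_filter.mp hA').2]
  exact congrArg _ (congrArg (· \ B) hAA')

theorem stmt_15_general (X : Finset ℕ) (𝓐 𝓑 : Finset (Finset ℕ))
    (hrec : IsRecoveringPair X 𝓐 𝓑) (hne : 𝓐.Nonempty)
    (a : ℕ → ℝ) (ha : ∀ i, a i = ((𝓐.filter fun A => i ∈ A).card : ℝ) / 𝓐.card)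
    (S C : Finset ℕ) (hS : ∃ B ∈ 𝓑, S = C \ B) :
    ∃ P ⊆ S, Real.logb 2 (((filteredA 𝓐 C S P).card : ℝ) / 𝓐.card)
      ≥ -∑ i ∈ S, binEnt (a i) := by
  obtain ⟨B, hB, hSB⟩ := hS
  have hcard : (0 : ℝ) < #𝓐 := by exact_mod_cast hne.card_pos
  obtain ⟨P, hPS, hP⟩ := exists_logb_le_of_marginals (S := S) (a := a)
    (r := fun P => (#{A ∈ 𝓐 | A ∩ S = P} : ℝ) / #𝓐) (fun P => by positivity)
    (by rw [← sum_div, ← Nat.cast_sum, sum_card_filter_inter_eq, div_self hcard.ne'])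
    (fun i hi => by rw [ha, card_filter_mem_eq_sum 𝓐 S hi, Nat.cast_sum, sum_div])
  refine ⟨P, hPS, ?_⟩
  rwa [card_filteredA_eq (fun A hA A' hA' => hrec.2.2.1 A hA A' hA' B hB B hB) hSB]

theorem stmt_15 (X : Finset ℕ) (𝓐 𝓑 : Finset (Finset ℕ))
    (hrec : IsRecoveringPair X 𝓐 𝓑) (hne : 𝓐.Nonempty)
    (a : ℕ → ℝ) (ha : ∀ i, a i = ((𝓐.filter fun A => i ∈ A).card : ℝ) / 𝓐.card)
    (S C : Finset ℕ) (hSC : S ⊆ C) (hCX : C ⊆ X) (hS : ∃ B ∈ 𝓑, S = C \ B) :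
    ∃ P ⊆ S, Real.logb 2 (((filteredA 𝓐 C S P).card : ℝ) / 𝓐.card)
      ≥ -∑ i ∈ S, binEnt (a i) :=
  stmt_15_general X 𝓐 𝓑 hrec hne a ha S C hS
end

section
/- Let (𝓐, 𝓑) be a k-uniform recovering pair over a finite set X with 𝓐 and 𝓑 nonempty, let θ > 0, and for i ∈ X let a_i = |{A ∈ 𝓐 : i ∈ A}| / |𝓐| and b_i = |{B ∈ 𝓑 : i ∈ B}| / |𝓑|. Suppose that for every A ∈ 𝓐, B ∈ 𝓑 and P ⊆ A \ B, the filtered pair satisfies |𝓐_{A, A\B, P}| · |𝓑_{A, A\B}| / (|𝓐| · |𝓑|) ≤ θ^(−k). Then log₂ |𝓐| ≤ ∑_{i ∈ X} f(a_i, b_i, θ), where f(x, y, t) = x(1−y)h(x) + h(x(1−y)) − x log₂ t. -/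
/-- The function `f(x, y, t) = x(1-y)h(x) + h(x(1-y)) - x log₂ t`. -/
noncomputable def fFun (x y t : ℝ) : ℝ :=
  x * (1 - y) * binEnt x + binEnt (x * (1 - y)) - x * Real.logb 2 t

/-!
Draw `(A, B)` uniformly from `𝓐 × 𝓑` and `A''` uniformly from `𝓐`. Taking logarithms in the
hypothesis at `P = A'' ∩ (A \ B)` and averaging over `A''` bounds `k log₂ θ` by the entropy of
`A'' ∩ (A \ B)` plus `log₂ (|𝓑| / |𝓑_{A, A\B}|)`. Because `A \ B` determines `A`, the second term
is `log₂ (1 / Pr[A \ B]) - log₂ |𝓐|`, which averages to the entropy of `A \ B` minus `log₂ |𝓐|`.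
Subadditivity of entropy bounds the first term by `∑_{i ∈ A \ B} h(a_i)`, whose average is
`∑ a_i (1 - b_i) h(a_i)`, and the entropy of `A \ B` by `∑ h(a_i (1 - b_i))`. Finally
`∑ a_i = k` by uniformity.
-/

open Finset Real BigOperators

section Entropy

variable {ι κ : Type*} [DecidableEq κ]

/-- The Shannon entropy, in bits, of `v x` for `x` uniform on `s`. -/
noncomputable def uniformEntropy (s : Finset ι) (v : ι → κ) : ℝ :=
  𝔼 x ∈ s, logb 2 (#s / #{z ∈ s | v z = v x})

lemma sum_div_card_fiber (s : Finset ι) (v : ι → κ) (f : κ → ℝ) :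
    ∑ x ∈ s, f (v x) / #{z ∈ s | v z = v x} = ∑ y ∈ s.image v, f y := by
  refine (sum_image' _ fun x hx => ?_).symm
  have hfib : 0 < #{z ∈ s | v z = v x} := card_pos.mpr ⟨x, mem_filter.mpr ⟨hx, rfl⟩⟩
  rw [sum_congr rfl fun z hz => by rw [(mem_filter.mp hz).2], sum_const, nsmul_eq_mul]
  field_simp

/-- Gibbs' inequality. -/
theorem uniformEntropy_le_expect_neg_logb {s : Finset ι} {v : ι → κ} (q : κ → ℝ)
    (hq : ∀ x ∈ s, 0 < q (v x)) (hq1 : ∑ y ∈ s.image v, q y ≤ 1) :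
    uniformEntropy s v ≤ 𝔼 x ∈ s, -logb 2 (q (v x)) := by
  rcases s.eq_empty_or_nonempty with rfl | hs
  · simp [uniformEntropy]
  set N : ι → ℝ := fun x => #{z ∈ s | v z = v x}
  have hN : ∀ x ∈ s, 0 < N x := fun x hx =>
    Nat.cast_pos.mpr (card_pos.mpr ⟨x, mem_filter.mpr ⟨hx, rfl⟩⟩)
  have hlog : ∀ x ∈ s,
      logb 2 (#s / N x) - -logb 2 (q (v x)) ≤ (#s * q (v x) / N x - 1) / log 2 := by
    intro x hx
    have := hN x hx
    have := hq x hx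
    rw [sub_neg_eq_add, ← logb_mul (by positivity) (by positivity), logb, div_mul_eq_mul_div,
      mul_comm]
    gcongr
    exact log_le_sub_one_of_pos (by positivity)
  have hsum : 𝔼 x ∈ s, #s * q (v x) / N x = ∑ y ∈ s.image v, q y := by
    rw [expect_eq_sum_div_card, ← sum_div_card_fiber s v q, sum_div]
    refine sum_congr rfl fun x _ => ?_
    have : (0 : ℝ) < #s := by exact_mod_cast hs.card_pos
    field_simp
    rfl
  rw [uniformEntropy, ← sub_nonpos, ← expect_sub_distrib]
  calc _ ≤ 𝔼 x ∈ s, (#s * q (v x) / N x - 1) / log 2 := expect_le_expect hlog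
    _ = (∑ y ∈ s.image v, q y - 1) / log 2 := by
      rw [← expect_div, expect_sub_distrib, hsum, expect_const hs]
    _ ≤ 0 := div_nonpos_of_nonpos_of_nonneg (by linarith) (log_nonneg one_le_two)

end Entropy

lemma sum_powerset_prod_ite_mem {α R : Type*} [DecidableEq α] [CommRing R] (U : Finset α)
    (p : α → R) : ∑ t ∈ U.powerset, ∏ i ∈ U, (if i ∈ t then p i else 1 - p i) = 1 := by
  have hsplit : ∀ t ∈ U.powerset,
      ∏ i ∈ U, (if i ∈ t then p i else 1 - p i) = (∏ i ∈ t, p i) * ∏ i ∈ U \ t, (1 - p i) :=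
    fun t ht => by
      rw [prod_ite, filter_mem_eq_inter, inter_eq_right.mpr (mem_powerset.mp ht), sdiff_eq_filter]
  rw [sum_congr rfl hsplit, ← prod_add]
  simp

section MemFreq

variable {ι α : Type*} [DecidableEq α] {s : Finset ι} {v : ι → Finset α} {i : α}

noncomputable def memFreq (s : Finset ι) (v : ι → Finset α) (i : α) : ℝ :=
  #{x ∈ s | i ∈ v x} / #s

lemma memFreq_nonneg : 0 ≤ memFreq s v i := by
  unfold memFreq; positivity

lemma memFreq_le_one : memFreq s v i ≤ 1 :=
  div_le_one_of_le₀ (by exact_mod_cast card_filter_le _ _) (Nat.cast_nonneg _)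

lemma memFreq_pos {x : ι} (hx : x ∈ s) (hi : i ∈ v x) : 0 < memFreq s v i :=
  div_pos (Nat.cast_pos.mpr (card_pos.mpr ⟨x, mem_filter.mpr ⟨hx, hi⟩⟩))
    (Nat.cast_pos.mpr (card_pos.mpr ⟨x, hx⟩))

lemma memFreq_lt_one {x : ι} (hx : x ∈ s) (hi : i ∉ v x) : memFreq s v i < 1 := by
  refine (div_lt_one (Nat.cast_pos.mpr (card_pos.mpr ⟨x, hx⟩))).mpr (Nat.cast_lt.mpr ?_)
  exact card_lt_card ⟨filter_subset _ _, fun h => hi (mem_filter.mp (h hx)).2⟩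

lemma one_sub_memFreq (hs : s.Nonempty) : 1 - memFreq s v i = #{x ∈ s | i ∉ v x} / #s := by
  have hcard : (#{x ∈ s | i ∈ v x} + #{x ∈ s | i ∉ v x} : ℝ) = #s := by
    exact_mod_cast card_filter_add_card_filter_not _
  have : (0 : ℝ) < #s := by exact_mod_cast hs.card_pos
  rw [memFreq]
  field_simp
  linarith

lemma expect_sum_eq_sum_memFreq_mul {U : Finset α} (hU : ∀ x ∈ s, v x ⊆ U) (f : α → ℝ) :
    𝔼 x ∈ s, ∑ j ∈ v x, f j = ∑ j ∈ U, memFreq s v j * f j := by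
  have hsum : ∀ x ∈ s, ∑ j ∈ v x, f j = ∑ j ∈ U, if j ∈ v x then f j else 0 := fun x hx => by
    rw [sum_ite_mem, inter_eq_right.mpr (hU x hx)]
  rw [expect_congr rfl hsum, expect_sum_comm]
  refine sum_congr rfl fun j _ => ?_
  rw [expect_eq_sum_div_card, sum_ite, sum_const_zero, add_zero, sum_const, nsmul_eq_mul, memFreq]
  ring

lemma expect_neg_logb_ite_memFreq (s : Finset ι) (v : ι → Finset α) (i : α) :
    𝔼 x ∈ s, -logb 2 (if i ∈ v x then memFreq s v i else 1 - memFreq s v i) =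
      binEnt (memFreq s v i) := by
  rcases s.eq_empty_or_nonempty with rfl | hs
  · simp [memFreq, binEnt]
  rw [expect_eq_sum_div_card, sum_congr rfl fun x _ => apply_ite (fun t => -logb 2 t) _ _ _,
    sum_ite, sum_const, sum_const, nsmul_eq_mul, nsmul_eq_mul, add_div, mul_div_right_comm,
    mul_div_right_comm, ← one_sub_memFreq hs, binEnt]
  rw [show (#{x ∈ s | i ∈ v x} : ℝ) / #s = memFreq s v i from rfl]
  ring

theorem uniformEntropy_le_sum_binEnt {U : Finset α} (hU : ∀ x ∈ s, v x ⊆ U) :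
    uniformEntropy s v ≤ ∑ i ∈ U, binEnt (memFreq s v i) := by
  set p := memFreq s v
  -- the product of the marginal Bernoulli distributions, as a distribution on subsets of `U`
  set q : Finset α → ℝ := fun t => ∏ i ∈ U, if i ∈ t then p i else 1 - p i
  have hfactor : ∀ x ∈ s, ∀ i ∈ U, 0 < if i ∈ v x then p i else 1 - p i := fun x hx i _ => by
    split_ifs with hi
    · exact memFreq_pos hx hi
    · exact sub_pos.mpr (memFreq_lt_one hx hi)
  have hq1 : ∑ t ∈ s.image v, q t ≤ 1 := by
    refine le_of_le_of_eq (sum_le_sum_of_subset_of_nonneg ?_ fun t _ _ => ?_)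
      (sum_powerset_prod_ite_mem U p)
    · simpa [subset_iff] using hU
    · refine prod_nonneg fun i _ => ?_
      split_ifs
      exacts [memFreq_nonneg, sub_nonneg.mpr memFreq_le_one]
  calc uniformEntropy s v ≤ 𝔼 x ∈ s, -logb 2 (q (v x)) :=
        uniformEntropy_le_expect_neg_logb q (fun x hx => prod_pos (hfactor x hx)) hq1
    _ = ∑ i ∈ U, 𝔼 x ∈ s, -logb 2 (if i ∈ v x then p i else 1 - p i) := by
      rw [← expect_sum_comm]
      refine expect_congr rfl fun x hx => ?_
      rw [logb_prod _ _ fun i hi => (hfactor x hx i hi).ne', ← sum_neg_distrib]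
    _ = ∑ i ∈ U, binEnt (p i) := sum_congr rfl fun i _ => expect_neg_logb_ite_memFreq s v i

end MemFreq

lemma memFreq_product_sdiff {α : Type*} [DecidableEq α] {s t : Finset (Finset α)}
    (ht : t.Nonempty) (i : α) :
    memFreq (s ×ˢ t) (fun z => z.1 \ z.2) i = memFreq s id i * (1 - memFreq t id i) := by
  have hfilter : {z ∈ s ×ˢ t | i ∈ z.1 \ z.2} = {A ∈ s | i ∈ A} ×ˢ {B ∈ t | i ∉ B} := by
    ext ⟨A, B⟩
    simp only [mem_filter, mem_product, mem_sdiff]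
    tauto
  rw [one_sub_memFreq ht, memFreq, memFreq, hfilter, card_product, card_product]
  push_cast
  rw [mul_div_mul_comm]
  rfl

lemma mul_logb_le_logb_div_add_logb_div {x y n m θ : ℝ} {k : ℕ} (hx : 0 < x) (hy : 0 < y)
    (hn : 0 < n) (hm : 0 < m) (h : x * y / (n * m) ≤ θ ^ (-(k : ℤ))) :
    k * logb 2 θ ≤ logb 2 (n / x) + logb 2 (m / y) := by
  have hlog := logb_le_logb_of_le one_lt_two (by positivity) h
  have hzpow : logb 2 (θ ^ (-(k : ℤ))) = -(k * logb 2 θ) := by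
    rw [logb, log_zpow, logb]
    push_cast
    ring
  have hsum : logb 2 (n / x) + logb 2 (m / y) = -logb 2 (x * y / (n * m)) := by
    rw [← logb_mul (by positivity) (by positivity), div_mul_div_comm, ← logb_inv, inv_div]
  linarith

namespace IsRecoveringPair

variable {X : Finset ℕ} {𝓐 𝓑 : Finset (Finset ℕ)}

lemma card_filteredA (h : IsRecoveringPair X 𝓐 𝓑) {B : Finset ℕ} (hB : B ∈ 𝓑) (C P : Finset ℕ) :
    #(filteredA 𝓐 C (C \ B) P) = #{A ∈ 𝓐 | A ∩ (C \ B) = P} := by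
  refine card_image_of_injOn fun A₁ h₁ A₂ h₂ hC => ?_
  simp only [coe_filter, Set.mem_ofPred_eq] at h₁ h₂
  refine h.2.2.1 A₁ h₁.1 A₂ h₂.1 B hB B hB (ext fun x => ?_)
  have hS := congrArg (x ∈ ·) (h₁.2.trans h₂.2.symm)
  have hC := congrArg (x ∈ ·) hC
  simp only [mem_inter, mem_sdiff, eq_iff_iff] at hS hC ⊢
  tauto

lemma card_filteredB (h : IsRecoveringPair X 𝓐 𝓑) {C : Finset ℕ} (hC : C ∈ 𝓐) (S : Finset ℕ) :
    #(filteredB 𝓑 C S) = #{B ∈ 𝓑 | C \ B = S} := by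
  refine card_image_of_injOn fun B₁ h₁ B₂ h₂ hBC => ?_
  simp only [coe_filter, Set.mem_ofPred_eq] at h₁ h₂
  exact h.2.2.2 C hC C hC B₁ h₁.1 B₂ h₂.1 hBC

lemma card_filter_sdiff_eq_card_filteredB (h : IsRecoveringPair X 𝓐 𝓑) {A B : Finset ℕ}
    (hA : A ∈ 𝓐) (hB : B ∈ 𝓑) :
    #{z ∈ 𝓐 ×ˢ 𝓑 | z.1 \ z.2 = A \ B} = #(filteredB 𝓑 A (A \ B)) := by
  have hfiber : {z ∈ 𝓐 ×ˢ 𝓑 | z.1 \ z.2 = A \ B} = {A} ×ˢ {B' ∈ 𝓑 | A \ B' = A \ B} := by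
    ext ⟨A', B'⟩
    simp only [mem_filter, mem_product, mem_singleton]
    constructor
    · rintro ⟨⟨hA', hB'⟩, hAB⟩
      obtain rfl := h.2.2.1 A' hA' A hA B' hB' B hB hAB
      exact ⟨rfl, hB', hAB⟩
    · rintro ⟨rfl, hB', hAB⟩
      exact ⟨⟨hA, hB'⟩, hAB⟩
  rw [hfiber, card_product, card_singleton, one_mul, h.card_filteredB hA]

/-- The filtered-pair bound, averaged over `P = A'' ∩ (A \ B)` with `A''` uniform in `𝓐`. -/
lemma mul_logb_add_logb_card_le (h : IsRecoveringPair X 𝓐 𝓑) {k : ℕ} {θ : ℝ} {A B : Finset ℕ}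
    (hA : A ∈ 𝓐) (hB : B ∈ 𝓑)
    (hfil : ∀ P ⊆ A \ B, (#(filteredA 𝓐 A (A \ B) P) * #(filteredB 𝓑 A (A \ B)) : ℝ) /
      (#𝓐 * #𝓑) ≤ θ ^ (-(k : ℤ))) :
    k * logb 2 θ + logb 2 #𝓐 ≤ ∑ i ∈ A \ B, binEnt (memFreq 𝓐 id i) +
      logb 2 (#(𝓐 ×ˢ 𝓑) / #{z ∈ 𝓐 ×ˢ 𝓑 | z.1 \ z.2 = A \ B}) := by
  have hcardA : (0 : ℝ) < #𝓐 := Nat.cast_pos.mpr (card_pos.mpr ⟨A, hA⟩)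
  have hcardB : (0 : ℝ) < #𝓑 := Nat.cast_pos.mpr (card_pos.mpr ⟨B, hB⟩)
  have hfilB : (0 : ℝ) < #(filteredB 𝓑 A (A \ B)) := by
    rw [h.card_filteredB hA]
    exact Nat.cast_pos.mpr (card_pos.mpr ⟨B, mem_filter.mpr ⟨hB, rfl⟩⟩)
  have hpoint : ∀ A'' ∈ 𝓐, k * logb 2 θ ≤
      logb 2 (#𝓐 / #{A' ∈ 𝓐 | A' ∩ (A \ B) = A'' ∩ (A \ B)}) +
        logb 2 (#𝓑 / #(filteredB 𝓑 A (A \ B))) := fun A'' hA'' => by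
    have hfilA := hfil (A'' ∩ (A \ B)) inter_subset_right
    rw [h.card_filteredA hB] at hfilA
    exact mul_logb_le_logb_div_add_logb_div
      (Nat.cast_pos.mpr (card_pos.mpr ⟨A'', mem_filter.mpr ⟨hA'', rfl⟩⟩)) hfilB hcardA hcardB hfilA
  have havg : k * logb 2 θ ≤
      uniformEntropy 𝓐 (· ∩ (A \ B)) + logb 2 (#𝓑 / #(filteredB 𝓑 A (A \ B))) := by
    have := le_expect ⟨A, hA⟩ hpoint
    rwa [expect_add_distrib, expect_const ⟨A, hA⟩] at this
  have hentropy : uniformEntropy 𝓐 (· ∩ (A \ B)) ≤ ∑ i ∈ A \ B, binEnt (memFreq 𝓐 id i) := by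
    refine (uniformEntropy_le_sum_binEnt fun _ _ => inter_subset_right).trans_eq
      (sum_congr rfl fun i hi => ?_)
    simp only [memFreq, mem_inter, hi, and_true, id]
  have hfiber : logb 2 (#(𝓐 ×ˢ 𝓑) / #{z ∈ 𝓐 ×ˢ 𝓑 | z.1 \ z.2 = A \ B}) =
      logb 2 #𝓐 + logb 2 (#𝓑 / #(filteredB 𝓑 A (A \ B))) := by
    rw [h.card_filter_sdiff_eq_card_filteredB hA hB, card_product, Nat.cast_mul, mul_div_assoc,
      logb_mul hcardA.ne' (by positivity)]
  linarith

end IsRecoveringPair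

theorem stmt_16_general (X : Finset ℕ) (𝓐 𝓑 : Finset (Finset ℕ)) (k : ℕ)
    (hrec : IsRecoveringPair X 𝓐 𝓑) (huni : IsUniformPair k 𝓐 𝓑)
    (hA : 𝓐.Nonempty) (hB : 𝓑.Nonempty) (θ : ℝ)
    (a b : ℕ → ℝ)
    (ha : ∀ i, a i = ((𝓐.filter fun A => i ∈ A).card : ℝ) / 𝓐.card)
    (hb : ∀ i, b i = ((𝓑.filter fun B => i ∈ B).card : ℝ) / 𝓑.card)
    (hfil : ∀ A ∈ 𝓐, ∀ B ∈ 𝓑, ∀ P ⊆ A \ B,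
      ((filteredA 𝓐 A (A \ B) P).card * (filteredB 𝓑 A (A \ B)).card : ℝ) /
        (𝓐.card * 𝓑.card) ≤ θ ^ (-(k : ℤ))) :
    Real.logb 2 𝓐.card ≤ ∑ i ∈ X, fFun (a i) (b i) θ := by
  obtain rfl : a = memFreq 𝓐 id := funext ha
  obtain rfl : b = memFreq 𝓑 id := funext hb
  have hsdiffX : ∀ z ∈ 𝓐 ×ˢ 𝓑, z.1 \ z.2 ⊆ X := fun z hz =>
    sdiff_subset.trans (hrec.1 z.1 (mem_product.mp hz).1)
  have hk : ∑ i ∈ X, memFreq 𝓐 id i = k := by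
    have := expect_sum_eq_sum_memFreq_mul (v := id) hrec.1 fun _ => 1
    simp only [id, sum_const, nsmul_one, mul_one] at this
    rw [← this, expect_congr rfl fun A hA => congrArg Nat.cast (huni.1 A hA), expect_const hA]
  have hpair := le_expect (hA.product hB) fun z hz => by
    obtain ⟨hz₁, hz₂⟩ := mem_product.mp hz
    exact hrec.mul_logb_add_logb_card_le hz₁ hz₂ (hfil z.1 hz₁ z.2 hz₂)
  rw [expect_add_distrib, expect_sum_eq_sum_memFreq_mul hsdiffX] at hpair
  have hentropy := uniformEntropy_le_sum_binEnt hsdiffX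
  simp only [uniformEntropy, memFreq_product_sdiff hB] at hentropy hpair
  simp only [fFun, sum_sub_distrib, sum_add_distrib, ← sum_mul, hk]
  linarith

theorem stmt_16 (X : Finset ℕ) (𝓐 𝓑 : Finset (Finset ℕ)) (k : ℕ)
    (hrec : IsRecoveringPair X 𝓐 𝓑) (huni : IsUniformPair k 𝓐 𝓑)
    (hA : 𝓐.Nonempty) (hB : 𝓑.Nonempty) (θ : ℝ) (hθ : 0 < θ)
    (a b : ℕ → ℝ)
    (ha : ∀ i, a i = ((𝓐.filter fun A => i ∈ A).card : ℝ) / 𝓐.card)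
    (hb : ∀ i, b i = ((𝓑.filter fun B => i ∈ B).card : ℝ) / 𝓑.card)
    (hfil : ∀ A ∈ 𝓐, ∀ B ∈ 𝓑, ∀ P ⊆ A \ B,
      ((filteredA 𝓐 A (A \ B) P).card * (filteredB 𝓑 A (A \ B)).card : ℝ) /
        (𝓐.card * 𝓑.card) ≤ θ ^ (-(k : ℤ))) :
    Real.logb 2 𝓐.card ≤ ∑ i ∈ X, fFun (a i) (b i) θ :=
  stmt_16_general X 𝓐 𝓑 k hrec huni hA hB θ a b ha hb hfil
end

section
/- Let (𝓐, 𝓑) be a k-uniform recovering pair over a finite set X with 𝓐 and 𝓑 nonempty, let θ > 0, and for i ∈ X let a_i = |{A ∈ 𝓐 : i ∈ A}| / |𝓐| and b_i = |{B ∈ 𝓑 : i ∈ B}| / |𝓑|. Suppose that for every A ∈ 𝓐, B ∈ 𝓑, every P₁ ⊆ A \ B and every P₂ ⊆ B \ A, one has |𝓐_{A, A\B, P₁}| · |𝓑_{A, A\B}| ≤ θ^(−k) · |𝓐| · |𝓑| and |𝓑_{B, B\A, P₂}| · |𝓐_{B, B\A}| ≤ θ^(−k) · |𝓐| · |𝓑|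 (where in the second inequality the roles of 𝓐 and 𝓑 in the definition of the filtered pair are interchanged). Then log₂(|𝓐| · |𝓑|) ≤ ∑_{i ∈ X} g(a_i, b_i, θ), where g(x, y, t) = f(x, y, t) + f(y, x, t) and f(x, y, t) = x(1−y)h(x) + h(x(1−y)) − x log₂ t. -/
/-- The function `g(x, y, t) = f(x, y, t) + f(y, x, t)`. -/
noncomputable def gFun (x y t : ℝ) : ℝ :=
  fFun x y t + fFun y x t

open Finset Real

/-!
Fix `A' ∈ 𝓐`, `B' ∈ 𝓑` and put `S = A' \ B'`. Gibbs' inequality, comparing the uniform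
distribution of `A ∩ S` (for `A` uniform in `𝓐`) with independent Bernoulli coordinates of
probabilities `a i`, bounds `log |𝓐|` by `∑_{i ∈ S} h(a i)` plus the average of `log` of the fibre
sizes of `A ↦ A ∩ S`. Because the pair is recovering, these fibres are the filtered families
`𝓐_{A',S,P}`, so the filtering hypothesis bounds them by `θ^(-k) |𝓐| |𝓑| / |𝓑_{A',S}|`.
Averaging over `(A', B')` and applying Gibbs once more, now to `(A, B) ↦ A \ B`, whose fibres
have size `|𝓑_{A,A \ B}|` and whose coordinates have frequencies `a i (1 - b i)`, gives
`log |𝓐| ≤ ∑ f(a i, b i, θ)` (using `∑ a i = k`); symmetrically for `|𝓑|`.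
-/

lemma sum_logb_nonpos_of_sum_le_card {ι : Type*} (s : Finset ι) (x : ι → ℝ)
    (hx : ∀ i ∈ s, 0 < x i) (hsum : ∑ i ∈ s, x i ≤ #s) :
    ∑ i ∈ s, logb 2 (x i) ≤ 0 := by
  have hlog : ∑ i ∈ s, log (x i) ≤ 0 := calc
    ∑ i ∈ s, log (x i) ≤ ∑ i ∈ s, (x i - 1) :=
      sum_le_sum fun i hi => log_le_sub_one_of_pos (hx i hi)
    _ ≤ 0 := by simpa [sum_sub_distrib] using hsum
  simp only [logb, ← sum_div]
  exact div_nonpos_of_nonpos_of_nonneg hlog (log_nonneg one_le_two)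

lemma sum_div_card_fiber_s17 {ι κ : Type*} [DecidableEq κ] (Ω : Finset ι) (T : ι → κ)
    (f : κ → ℝ) :
    ∑ ω ∈ Ω, f (T ω) / #{ω' ∈ Ω | T ω' = T ω} = ∑ s ∈ Ω.image T, f s := by
  rw [← sum_fiberwise_of_maps_to fun ω hω => mem_image_of_mem T hω]
  refine sum_congr rfl fun s hs => ?_
  obtain ⟨ω₀, hω₀, rfl⟩ := mem_image.mp hs
  have hconst : ∀ ω ∈ Ω.filter (T · = T ω₀),
      f (T ω) / #{ω' ∈ Ω | T ω' = T ω} = f (T ω₀) / #{ω' ∈ Ω | T ω' = T ω₀} :=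
    fun ω hω => by rw [(mem_filter.mp hω).2]
  rw [sum_congr rfl hconst, sum_const, nsmul_eq_mul, mul_div_cancel₀]
  exact_mod_cast (card_pos.mpr ⟨ω₀, by simp [hω₀]⟩).ne'

/-- Gibbs' inequality: the entropy of `T` under the uniform distribution on `Ω` (times `#Ω`) is
at most its cross entropy relative to any subprobability `q`. -/
theorem sum_logb_card_div_card_fiber_le {ι κ : Type*} [DecidableEq κ] (Ω : Finset ι)
    (T : ι → κ) (q : κ → ℝ) (hq : ∀ ω ∈ Ω, 0 < q (T ω)) (hsum : ∑ s ∈ Ω.image T, q s ≤ 1) :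
    ∑ ω ∈ Ω, logb 2 (#Ω / #{ω' ∈ Ω | T ω' = T ω}) ≤ ∑ ω ∈ Ω, -logb 2 (q (T ω)) := by
  have hΩ : ∀ ω ∈ Ω, (0 : ℝ) < #Ω := fun ω hω => by exact_mod_cast card_pos.mpr ⟨ω, hω⟩
  have hfib : ∀ ω ∈ Ω, (0 : ℝ) < #{ω' ∈ Ω | T ω' = T ω} := fun ω hω => by
    exact_mod_cast card_pos.mpr ⟨ω, by simp [hω]⟩
  have key := sum_logb_nonpos_of_sum_le_card Ω
    (fun ω => #Ω / #{ω' ∈ Ω | T ω' = T ω} * q (T ω))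
    (fun ω hω => mul_pos (div_pos (hΩ ω hω) (hfib ω hω)) (hq ω hω))
    (by
      simp_rw [div_mul_eq_mul_div, mul_div_assoc, ← mul_sum, sum_div_card_fiber_s17 Ω T q]
      exact mul_le_of_le_one_right (Nat.cast_nonneg _) hsum)
  have expand : ∀ ω ∈ Ω, logb 2 (#Ω / #{ω' ∈ Ω | T ω' = T ω} * q (T ω))
      = logb 2 (#Ω / #{ω' ∈ Ω | T ω' = T ω}) + logb 2 (q (T ω)) := fun ω hω =>
    logb_mul (div_pos (hΩ ω hω) (hfib ω hω)).ne' (hq ω hω).ne'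
  rw [sum_congr rfl expand, sum_add_distrib] at key
  rw [sum_neg_distrib]
  linarith

section Frequency

variable {ι : Type*} {Ω : Finset ι} {P : ι → Prop} [DecidablePred P] {x : ℝ}

lemma pos_of_card_filter_eq_mul (h : (#{ω ∈ Ω | P ω} : ℝ) = x * #Ω) {ω : ι} (hω : ω ∈ Ω)
    (hP : P ω) : 0 < x := by
  have hpos : (0 : ℝ) < #{ω ∈ Ω | P ω} := by
    exact_mod_cast card_pos.mpr ⟨ω, mem_filter.mpr ⟨hω, hP⟩⟩
  rw [h] at hpos
  exact pos_of_mul_pos_left hpos (Nat.cast_nonneg _)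

lemma lt_one_of_card_filter_eq_mul (h : (#{ω ∈ Ω | P ω} : ℝ) = x * #Ω) {ω : ι} (hω : ω ∈ Ω)
    (hP : ¬P ω) : x < 1 := by
  have hlt : (#{ω ∈ Ω | P ω} : ℝ) < #Ω := by
    exact_mod_cast card_lt_card (filter_ssubset.mpr ⟨ω, hω, hP⟩)
  rw [h] at hlt
  exact (mul_lt_iff_lt_one_left (by exact_mod_cast card_pos.mpr ⟨ω, hω⟩)).mp hlt

lemma mem_Icc_of_card_filter_eq_mul (h : (#{ω ∈ Ω | P ω} : ℝ) = x * #Ω) (hΩ : Ω.Nonempty) :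
    x ∈ Set.Icc 0 1 := by
  have hcard : (0 : ℝ) < #Ω := by exact_mod_cast hΩ.card_pos
  have hle : (#{ω ∈ Ω | P ω} : ℝ) ≤ #Ω := by exact_mod_cast card_filter_le Ω P
  rw [h] at hle
  exact ⟨nonneg_of_mul_nonneg_left (h ▸ Nat.cast_nonneg _) hcard,
    (mul_le_iff_le_one_left hcard).mp hle⟩

lemma sum_neg_logb_ite_eq_card_mul_binEnt (h : (#{ω ∈ Ω | P ω} : ℝ) = x * #Ω) :
    ∑ ω ∈ Ω, -logb 2 (if P ω then x else 1 - x) = #Ω * binEnt x := by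
  have hnot : (#{ω ∈ Ω | ¬P ω} : ℝ) = (1 - x) * #Ω := by
    have := card_filter_add_card_filter_not (s := Ω) P
    rw [sub_mul, one_mul, ← h, ← this]
    push_cast
    ring
  simp only [apply_ite, sum_ite, sum_const, nsmul_eq_mul, h, hnot, binEnt]
  ring

end Frequency

section Bernoulli

variable {α : Type*} [DecidableEq α]

/-- The probability that a random subset of `S`, containing each `i` independently with
probability `p i`, equals `P` (for `P ⊆ S`). -/
noncomputable def bernoulliProd (p : α → ℝ) (S P : Finset α) : ℝ :=
  ∏ i ∈ S, if i ∈ P then p i else 1 - p i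

lemma sum_powerset_bernoulliProd (p : α → ℝ) (S : Finset α) :
    ∑ P ∈ S.powerset, bernoulliProd p S P = 1 := by
  have h := prod_add p (fun i => 1 - p i) S
  simp only [add_sub_cancel, prod_const_one] at h
  rw [h]
  refine sum_congr rfl fun P hP => ?_
  rw [bernoulliProd, prod_ite, filter_mem_eq_inter, inter_eq_right.mpr (mem_powerset.mp hP),
    filter_notMem_eq_sdiff]

lemma bernoulliProd_nonneg {p : α → ℝ} {S : Finset α} (hp : ∀ i ∈ S, p i ∈ Set.Icc 0 1)
    (P : Finset α) : 0 ≤ bernoulliProd p S P :=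
  prod_nonneg fun i hi => by
    split_ifs
    · exact (hp i hi).1
    · linarith [(hp i hi).2]

/-- Gibbs' inequality against `bernoulliProd p S`, where `p i` is the frequency of `i ∈ T ω`:
the cross entropy is then `∑ h(p i)`. -/
theorem sum_logb_card_div_card_fiber_le_card_mul_sum_binEnt {ι : Type*} (Ω : Finset ι)
    (T : ι → Finset α) (S : Finset α) (p : α → ℝ) (hT : ∀ ω ∈ Ω, T ω ⊆ S)
    (hp : ∀ i ∈ S, (#{ω ∈ Ω | i ∈ T ω} : ℝ) = p i * #Ω) :
    ∑ ω ∈ Ω, logb 2 (#Ω / #{ω' ∈ Ω | T ω' = T ω}) ≤ #Ω * ∑ i ∈ S, binEnt (p i) := by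
  have hfactor : ∀ ω ∈ Ω, ∀ i ∈ S, 0 < if i ∈ T ω then p i else 1 - p i := by
    intro ω hω i hi
    split_ifs with hmem
    · exact pos_of_card_filter_eq_mul (hp i hi) hω hmem
    · linarith [lt_one_of_card_filter_eq_mul (hp i hi) hω hmem]
  have hsum : ∑ s ∈ Ω.image T, bernoulliProd p S s ≤ 1 := by
    rcases Ω.eq_empty_or_nonempty with rfl | hΩ
    · simp
    calc ∑ s ∈ Ω.image T, bernoulliProd p S s ≤ ∑ s ∈ S.powerset, bernoulliProd p S s :=
          sum_le_sum_of_subset_of_nonneg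
            (image_subset_iff.mpr fun ω hω => mem_powerset.mpr (hT ω hω))
            fun s _ _ => bernoulliProd_nonneg
              (fun i hi => mem_Icc_of_card_filter_eq_mul (hp i hi) hΩ) s
      _ = 1 := sum_powerset_bernoulliProd p S
  calc ∑ ω ∈ Ω, logb 2 (#Ω / #{ω' ∈ Ω | T ω' = T ω})
      ≤ ∑ ω ∈ Ω, -logb 2 (bernoulliProd p S (T ω)) :=
        sum_logb_card_div_card_fiber_le Ω T _ (fun ω hω => prod_pos (hfactor ω hω)) hsum
    _ = ∑ i ∈ S, ∑ ω ∈ Ω, -logb 2 (if i ∈ T ω then p i else 1 - p i) := by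
        rw [sum_comm]
        refine sum_congr rfl fun ω hω => ?_
        rw [bernoulliProd, logb_prod _ _ fun i hi => (hfactor ω hω i hi).ne', sum_neg_distrib]
    _ = #Ω * ∑ i ∈ S, binEnt (p i) := by
        rw [mul_sum]
        exact sum_congr rfl fun i hi => sum_neg_logb_ite_eq_card_mul_binEnt (hp i hi)

lemma sum_sum_eq_sum_card_filter_mul {ι : Type*} (Ω : Finset ι) (T : ι → Finset α)
    (X : Finset α) (hT : ∀ ω ∈ Ω, T ω ⊆ X) (f : α → ℝ) :
    ∑ ω ∈ Ω, ∑ i ∈ T ω, f i = ∑ i ∈ X, #{ω ∈ Ω | i ∈ T ω} * f i := by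
  rw [sum_comm' (t' := X) (s' := fun i => {ω ∈ Ω | i ∈ T ω})]
  · simp only [sum_const, nsmul_eq_mul]
  · intro ω i
    simp only [mem_filter]
    exact ⟨fun h => ⟨⟨h.1, h.2⟩, hT ω h.1 h.2⟩, fun h => h.1⟩

end Bernoulli

def Recovers (𝓐 𝓑 : Finset (Finset ℕ)) : Prop :=
  ∀ A ∈ 𝓐, ∀ A' ∈ 𝓐, ∀ B ∈ 𝓑, ∀ B' ∈ 𝓑, A \ B = A' \ B' → A = A'

lemma IsRecoveringPair.recovers {X : Finset ℕ} {𝓐 𝓑 : Finset (Finset ℕ)}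
    (h : IsRecoveringPair X 𝓐 𝓑) : Recovers 𝓐 𝓑 :=
  h.2.2.1

lemma IsRecoveringPair.recovers_swap {X : Finset ℕ} {𝓐 𝓑 : Finset (Finset ℕ)}
    (h : IsRecoveringPair X 𝓐 𝓑) : Recovers 𝓑 𝓐 :=
  fun B hB B' hB' A hA A' hA' => h.2.2.2 A hA A' hA' B hB B' hB'

noncomputable def freq (𝓐 : Finset (Finset ℕ)) (i : ℕ) : ℝ :=
  #{A ∈ 𝓐 | i ∈ A} / #𝓐

lemma card_filter_mem_eq_freq_mul {𝓐 : Finset (Finset ℕ)} (h𝓐 : 𝓐.Nonempty) (i : ℕ) :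
    (#{A ∈ 𝓐 | i ∈ A} : ℝ) = freq 𝓐 i * #𝓐 :=
  (div_mul_cancel₀ _ (by exact_mod_cast h𝓐.card_pos.ne')).symm

lemma sum_freq_eq {X : Finset ℕ} {𝓐 : Finset (Finset ℕ)} {k : ℕ} (hX : ∀ A ∈ 𝓐, A ⊆ X)
    (hk : ∀ A ∈ 𝓐, #A = k) (h𝓐 : 𝓐.Nonempty) : ∑ i ∈ X, freq 𝓐 i = k := by
  have hcount := sum_sum_eq_sum_card_filter_mul 𝓐 id X hX fun _ => 1
  simp only [id, sum_const, nsmul_eq_mul, mul_one] at hcount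
  rw [sum_congr rfl fun A hA => by rw [hk A hA], sum_const, nsmul_eq_mul] at hcount
  simp only [freq, ← sum_div, ← hcount]
  field_simp [h𝓐.card_pos.ne']

lemma card_filteredB (𝓑 : Finset (Finset ℕ)) (C S : Finset ℕ) :
    #(filteredB 𝓑 C S) = #{B ∈ 𝓑 | C \ B = S} := by
  refine card_image_of_injOn fun B₁ h₁ B₂ h₂ heq => ?_
  have hC : C \ B₁ = C \ B₂ := (mem_filter.mp h₁).2.trans (mem_filter.mp h₂).2.symm
  ext i
  have e₁ := congrArg (i ∈ ·) heq
  have e₂ := congrArg (i ∈ ·) hC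
  simp only [mem_sdiff, eq_iff_iff] at e₁ e₂
  by_cases i ∈ C <;> tauto

lemma card_filteredA {𝓐 𝓑 : Finset (Finset ℕ)} (hrec : Recovers 𝓐 𝓑) {A' B' : Finset ℕ}
    (hB' : B' ∈ 𝓑) (P : Finset ℕ) :
    #(filteredA 𝓐 A' (A' \ B') P) = #{A ∈ 𝓐 | A ∩ (A' \ B') = P} := by
  refine card_image_of_injOn fun A₁ h₁ A₂ h₂ heq => ?_
  obtain ⟨hA₁, hP₁⟩ := mem_filter.mp h₁
  obtain ⟨hA₂, hP₂⟩ := mem_filter.mp h₂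
  refine hrec A₁ hA₁ A₂ hA₂ B' hB' B' hB' ?_
  ext i
  have e₁ := congrArg (i ∈ ·) heq
  have e₂ := congrArg (i ∈ ·) (hP₁.trans hP₂.symm)
  simp only [mem_sdiff, mem_inter, eq_iff_iff] at e₁ e₂ ⊢
  tauto

lemma card_filter_sdiff_eq_sdiff {𝓐 𝓑 : Finset (Finset ℕ)} (hrec : Recovers 𝓐 𝓑)
    {A' B' : Finset ℕ} (hA' : A' ∈ 𝓐) (hB' : B' ∈ 𝓑) :
    #{ω ∈ 𝓐 ×ˢ 𝓑 | ω.1 \ ω.2 = A' \ B'} = #{B ∈ 𝓑 | A' \ B = A' \ B'} := by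
  have hfiber : {ω ∈ 𝓐 ×ˢ 𝓑 | ω.1 \ ω.2 = A' \ B'} = {A'} ×ˢ {B ∈ 𝓑 | A' \ B = A' \ B'} := by
    ext ⟨A, B⟩
    simp only [mem_filter, mem_product, mem_singleton]
    constructor
    · rintro ⟨⟨hA, hB⟩, h⟩
      obtain rfl := hrec A hA A' hA' B hB B' hB' h
      exact ⟨rfl, hB, h⟩
    · rintro ⟨rfl, hB, h⟩
      exact ⟨⟨hA', hB⟩, h⟩
  rw [hfiber, card_product, card_singleton, one_mul]

lemma card_filter_mem_sdiff {𝓐 𝓑 : Finset (Finset ℕ)} (h𝓐 : 𝓐.Nonempty) (h𝓑 : 𝓑.Nonempty)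
    (i : ℕ) : (#{ω ∈ 𝓐 ×ˢ 𝓑 | i ∈ ω.1 \ ω.2} : ℝ)
      = freq 𝓐 i * (1 - freq 𝓑 i) * #(𝓐 ×ˢ 𝓑) := by
  have hsplit : {ω ∈ 𝓐 ×ˢ 𝓑 | i ∈ ω.1 \ ω.2} = {A ∈ 𝓐 | i ∈ A} ×ˢ {B ∈ 𝓑 | i ∉ B} := by
    rw [← filter_product]
    simp only [mem_sdiff]
  have hnot : (#{B ∈ 𝓑 | i ∉ B} : ℝ) = (1 - freq 𝓑 i) * #𝓑 := by
    have := card_filter_add_card_filter_not (s := 𝓑) (i ∈ ·)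
    rw [sub_mul, one_mul, ← card_filter_mem_eq_freq_mul h𝓑, ← this]
    push_cast
    ring
  rw [hsplit, card_product, card_product]
  push_cast
  rw [hnot, card_filter_mem_eq_freq_mul h𝓐]
  ring

section OneSide

variable {X : Finset ℕ} {𝓐 𝓑 : Finset (Finset ℕ)} {k : ℕ} {θ : ℝ}

lemma logb_card_add_logb_card_filter_sdiff_eq_le (hrec : Recovers 𝓐 𝓑) (hθ : 0 < θ)
    (hfil : ∀ A ∈ 𝓐, ∀ B ∈ 𝓑, ∀ P ⊆ A \ B,
      (#(filteredA 𝓐 A (A \ B) P) * #(filteredB 𝓑 A (A \ B)) : ℝ)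
        ≤ θ ^ (-(k : ℤ)) * (#𝓐 * #𝓑))
    {A' B' : Finset ℕ} (hA' : A' ∈ 𝓐) (hB' : B' ∈ 𝓑) :
    logb 2 #𝓐 + logb 2 #{B ∈ 𝓑 | A' \ B = A' \ B'}
      ≤ ∑ i ∈ A' \ B', binEnt (freq 𝓐 i) + (logb 2 (#𝓐 * #𝓑) - k * logb 2 θ) := by
  set S := A' \ B'
  have hN : (0 : ℝ) < #𝓐 := by exact_mod_cast card_pos.mpr ⟨A', hA'⟩
  have hM : (0 : ℝ) < #𝓑 := by exact_mod_cast card_pos.mpr ⟨B', hB'⟩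
  have hn₂ : (0 : ℝ) < #{B ∈ 𝓑 | A' \ B = S} := by
    exact_mod_cast card_pos.mpr ⟨B', by simp [hB', S]⟩
  have hentropy := sum_logb_card_div_card_fiber_le_card_mul_sum_binEnt 𝓐 (· ∩ S) S (freq 𝓐)
    (fun _ _ => inter_subset_right) fun i hi => by
      simp only [mem_inter, hi, and_true]
      exact card_filter_mem_eq_freq_mul ⟨A', hA'⟩ i
  have hfiber : ∀ A ∈ 𝓐, logb 2 #𝓐 + logb 2 #{B ∈ 𝓑 | A' \ B = S}
      - (logb 2 (#𝓐 * #𝓑) - k * logb 2 θ) ≤ logb 2 (#𝓐 / #{A'' ∈ 𝓐 | A'' ∩ S = A ∩ S}) := by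
    intro A hA
    have hn₁ : (0 : ℝ) < #{A'' ∈ 𝓐 | A'' ∩ S = A ∩ S} := by
      exact_mod_cast card_pos.mpr ⟨A, by simp [hA]⟩
    have h := hfil A' hA' B' hB' (A ∩ S) inter_subset_right
    rw [card_filteredA hrec hB', card_filteredB] at h
    have hlog := logb_le_logb_of_le (b := 2) one_lt_two (mul_pos hn₁ hn₂) h
    rw [logb_mul hn₁.ne' hn₂.ne', logb_mul (zpow_pos hθ _).ne' (mul_pos hN hM).ne', zpow_neg,
      zpow_natCast, logb_inv, logb_pow] at hlog
    rw [logb_div hN.ne' hn₁.ne']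
    linarith
  have hsum := (sum_le_sum hfiber).trans hentropy
  rw [sum_const, nsmul_eq_mul] at hsum
  linarith [le_of_mul_le_mul_left hsum hN]

lemma card_mul_logb_card_sub_sum_logb_le_card_mul_sum_binEnt (hX : ∀ A ∈ 𝓐, A ⊆ X)
    (hrec : Recovers 𝓐 𝓑) (h𝓐 : 𝓐.Nonempty) (h𝓑 : 𝓑.Nonempty) :
    #(𝓐 ×ˢ 𝓑) * logb 2 #(𝓐 ×ˢ 𝓑)
        - ∑ ω ∈ 𝓐 ×ˢ 𝓑, logb 2 #{B ∈ 𝓑 | ω.1 \ B = ω.1 \ ω.2}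
      ≤ #(𝓐 ×ˢ 𝓑) * ∑ i ∈ X, binEnt (freq 𝓐 i * (1 - freq 𝓑 i)) := by
  have hΩ : (0 : ℝ) < #(𝓐 ×ˢ 𝓑) := by exact_mod_cast (h𝓐.product h𝓑).card_pos
  have hentropy := sum_logb_card_div_card_fiber_le_card_mul_sum_binEnt (𝓐 ×ˢ 𝓑)
    (fun ω => ω.1 \ ω.2) X _ (fun ω hω => sdiff_subset.trans (hX _ (mem_product.mp hω).1))
    fun i _ => card_filter_mem_sdiff h𝓐 h𝓑 i
  have hfibers : ∀ ω ∈ 𝓐 ×ˢ 𝓑,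
      logb 2 (#(𝓐 ×ˢ 𝓑) / #{ω' ∈ 𝓐 ×ˢ 𝓑 | ω'.1 \ ω'.2 = ω.1 \ ω.2})
        = logb 2 #(𝓐 ×ˢ 𝓑) - logb 2 #{B ∈ 𝓑 | ω.1 \ B = ω.1 \ ω.2} := by
    intro ω hω
    obtain ⟨hA, hB⟩ := mem_product.mp hω
    rw [card_filter_sdiff_eq_sdiff hrec hA hB, logb_div hΩ.ne']
    exact_mod_cast (card_pos.mpr ⟨ω.2, by simp [hB]⟩).ne'
  rwa [sum_congr rfl hfibers, sum_sub_distrib, sum_const, nsmul_eq_mul] at hentropy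

theorem logb_card_le_sum_fFun (hX : ∀ A ∈ 𝓐, A ⊆ X) (hk : ∀ A ∈ 𝓐, #A = k)
    (hrec : Recovers 𝓐 𝓑) (h𝓐 : 𝓐.Nonempty) (h𝓑 : 𝓑.Nonempty) (hθ : 0 < θ)
    (hfil : ∀ A ∈ 𝓐, ∀ B ∈ 𝓑, ∀ P ⊆ A \ B,
      (#(filteredA 𝓐 A (A \ B) P) * #(filteredB 𝓑 A (A \ B)) : ℝ)
        ≤ θ ^ (-(k : ℤ)) * (#𝓐 * #𝓑)) :
    logb 2 #𝓐 ≤ ∑ i ∈ X, fFun (freq 𝓐 i) (freq 𝓑 i) θ := by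
  set c : ℕ → ℝ := fun i => freq 𝓐 i * (1 - freq 𝓑 i)
  set Ω := 𝓐 ×ˢ 𝓑
  have hΩ : (#Ω : ℝ) = #𝓐 * #𝓑 := by simp [Ω]
  have hΩpos : (0 : ℝ) < #Ω := by exact_mod_cast (h𝓐.product h𝓑).card_pos
  have hTX : ∀ ω ∈ Ω, ω.1 \ ω.2 ⊆ X := fun ω hω => sdiff_subset.trans (hX _ (mem_product.mp hω).1)
  have hcount : ∀ i, (#{ω ∈ Ω | i ∈ ω.1 \ ω.2} : ℝ) = c i * #Ω := card_filter_mem_sdiff h𝓐 h𝓑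
  have hentropy := card_mul_logb_card_sub_sum_logb_le_card_mul_sum_binEnt hX hrec h𝓐 h𝓑
  have hpairs : ∑ ω ∈ Ω, (logb 2 #𝓐 + logb 2 #{B ∈ 𝓑 | ω.1 \ B = ω.1 \ ω.2})
      ≤ ∑ ω ∈ Ω, (∑ i ∈ ω.1 \ ω.2, binEnt (freq 𝓐 i) + (logb 2 (#𝓐 * #𝓑) - k * logb 2 θ)) :=
    sum_le_sum fun ω hω => logb_card_add_logb_card_filter_sdiff_eq_le hrec hθ hfil
      (mem_product.mp hω).1 (mem_product.mp hω).2
  rw [sum_add_distrib, sum_add_distrib, sum_sum_eq_sum_card_filter_mul Ω _ X hTX] at hpairs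
  simp only [hcount, sum_const, nsmul_eq_mul] at hpairs
  have hmain : logb 2 #𝓐 ≤ ∑ i ∈ X, c i * binEnt (freq 𝓐 i) + ∑ i ∈ X, binEnt (c i)
      - k * logb 2 θ := by
    refine le_of_mul_le_mul_left ?_ hΩpos
    have hcross : ∑ i ∈ X, c i * #Ω * binEnt (freq 𝓐 i)
        = #Ω * ∑ i ∈ X, c i * binEnt (freq 𝓐 i) := by
      rw [mul_sum]
      exact sum_congr rfl fun _ _ => by ring
    rw [← hΩ, hcross] at hpairs
    linarith
  simp only [fFun, sum_sub_distrib, sum_add_distrib, ← sum_mul, sum_freq_eq hX hk h𝓐]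
  exact hmain

end OneSide

theorem stmt_17 (X : Finset ℕ) (𝓐 𝓑 : Finset (Finset ℕ)) (k : ℕ)
    (hrec : IsRecoveringPair X 𝓐 𝓑) (huni : IsUniformPair k 𝓐 𝓑)
    (hA : 𝓐.Nonempty) (hB : 𝓑.Nonempty) (θ : ℝ) (hθ : 0 < θ)
    (a b : ℕ → ℝ)
    (ha : ∀ i, a i = ((𝓐.filter fun A => i ∈ A).card : ℝ) / 𝓐.card)
    (hb : ∀ i, b i = ((𝓑.filter fun B => i ∈ B).card : ℝ) / 𝓑.card)
    (hfil₁ : ∀ A ∈ 𝓐, ∀ B ∈ 𝓑, ∀ P₁ ⊆ A \ B,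
      ((filteredA 𝓐 A (A \ B) P₁).card * (filteredB 𝓑 A (A \ B)).card : ℝ)
        ≤ θ ^ (-(k : ℤ)) * (𝓐.card * 𝓑.card))
    (hfil₂ : ∀ A ∈ 𝓐, ∀ B ∈ 𝓑, ∀ P₂ ⊆ B \ A,
      ((filteredA 𝓑 B (B \ A) P₂).card * (filteredB 𝓐 B (B \ A)).card : ℝ)
        ≤ θ ^ (-(k : ℤ)) * (𝓐.card * 𝓑.card)) :
    Real.logb 2 (𝓐.card * 𝓑.card) ≤ ∑ i ∈ X, gFun (a i) (b i) θ := by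
  obtain rfl : a = freq 𝓐 := funext ha
  obtain rfl : b = freq 𝓑 := funext hb
  have h𝓐 := logb_card_le_sum_fFun hrec.1 huni.1 hrec.recovers hA hB hθ hfil₁
  have h𝓑 := logb_card_le_sum_fFun hrec.2.1 huni.2 hrec.recovers_swap hB hA hθ
    fun B hB A hA P hP => (hfil₂ A hA B hB P hP).trans_eq (by ring)
  rw [logb_mul (by exact_mod_cast hA.card_pos.ne') (by exact_mod_cast hB.card_pos.ne')]
  simp only [gFun, sum_add_distrib]
  exact add_le_add h𝓐 h𝓑
end
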